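/- arXiv:0805.4167 — 5 statements merged into one kernel-verified Lean document; each statement's English description precedes it below -/
import Mathlib

section
/- Let Σ be a nonempty finite alphabet and let L ⊆ Σ^ω be any language of infinite words. Then safety(prefixes(L)) is a safety language, the language L ∪ (Σ^ω ∖ safety(prefixes(L))) is a liveness language, and L equals the intersection of these two languages: L = safety(prefixes(L)) ∩ (L ∪ (Σ^ω ∖ safety(prefixes(L)))). Hence every language of infinite words is the intersection of a safety language and a liveness language. -/
open scoped Classical
noncomputable section

/-! ### Languages of infinite words: prefixes, safety, liveness -/

/-- The finite prefix of length `n` of an infinite word `w`. -/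
def wordPrefix {A : Type} (w : ℕ → A) (n : ℕ) : List A := (List.range n).map w

/-- The set of finite prefixes of words of `L`. -/
def prefixes {A : Type} (L : Set (ℕ → A)) : Set (List A) :=
  {v | ∃ w ∈ L, v = wordPrefix w v.length}

/-- The set of infinite limits of a set of finite words: all infinite words
whose every finite prefix lies in `P`. -/
def safetyCl {A : Type} (P : Set (List A)) : Set (ℕ → A) :=
  {w | ∀ n : ℕ, wordPrefix w n ∈ P}

/-- A language of infinite words is a safety language if it equals the
safety closure of its set of prefixes. -/
def IsSafetyLang {A : Type} (L : Set (ℕ → A)) : Prop := L = safetyCl (prefixes L)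

/-- A language of infinite words is a liveness language if every finite word
is a prefix of some word of the language. -/
def IsLivenessLang {A : Type} (L : Set (ℕ → A)) : Prop := prefixes L = Set.univ

lemma wordPrefix_length {A : Type} (w : ℕ → A) (n : ℕ) :
    (wordPrefix w n).length = n := by simp [wordPrefix]

lemma mem_prefixes_self {A : Type} {L : Set (ℕ → A)} {w : ℕ → A} (hw : w ∈ L) (n : ℕ) :
    wordPrefix w n ∈ prefixes L := ⟨w, hw, by rw [wordPrefix_length]⟩

lemma subset_safetyCl {A : Type} (L : Set (ℕ → A)) : L ⊆ safetyCl (prefixes L) :=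
  fun _ hw n => mem_prefixes_self hw n

theorem safety_liveness_decomposition {A : Type} [Fintype A] [Nonempty A]
    (L : Set (ℕ → A)) :
    IsSafetyLang (safetyCl (prefixes L)) ∧
    IsLivenessLang (L ∪ (safetyCl (prefixes L))ᶜ) ∧
    L = safetyCl (prefixes L) ∩ (L ∪ (safetyCl (prefixes L))ᶜ) := by

  set S := safetyCl (prefixes L) with hS
  have hsafe : IsSafetyLang S := by
    apply Set.Subset.antisymm (subset_safetyCl S)
    intro w hw n
    obtain ⟨u, hu, hv⟩ := hw n
    rw [wordPrefix_length] at hv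
    rw [hv]
    exact hu n
  refine ⟨hsafe, ?_, ?_⟩
  · apply Set.eq_univ_of_forall
    intro v
    by_cases hv : v ∈ prefixes L
    · obtain ⟨u, hu, huv⟩ := hv
      exact ⟨u, Or.inl hu, huv⟩
    · obtain ⟨a⟩ := ‹Nonempty A›
      refine ⟨fun n => if h : n < v.length then v.get ⟨n, h⟩ else a, Or.inr ?_, ?_⟩
      · intro hmem
        apply hv
        have := hmem v.length
        convert this using 2
        · apply List.ext_get (by simp [wordPrefix_length])
          intro n h1 h2
          simp [wordPrefix, h1]
      · apply List.ext_get (by simp [wordPrefix_length])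
        intro n h1 h2
        simp [wordPrefix, h1]
  · apply Set.Subset.antisymm
    · exact fun w hw => ⟨subset_safetyCl L hw, Or.inl hw⟩
    · rintro w ⟨hwS, hw | hw⟩
      · exact hw
      · exact absurd hwS hw
end
end

section
/- For every finite deterministic game graph G = ((S,E),(S1,S2)) and every priority function p : S → ℕ, the parity game is determined: Win1(Parity(p)) = S ∖ Win2(coParity(p)), where coParity(p) is the set of plays π such that min p(Inf(π)) is odd (i.e., the complement of Parity(p) within the set of all plays). Equivalently, from every state exactly one of the two players has a sure winning strategy for their respective objective. -/
open scoped Classical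
noncomputable section

/-! ### Deterministic two-player games on graphs -/

/-- The set of states occurring infinitely often in a play. -/
def infSet {S : Type} (π : ℕ → S) : Set S :=
  {t | ∀ N : ℕ, ∃ k : ℕ, N ≤ k ∧ π k = t}

/-- Parity objective: the minimal priority occurring infinitely often is even. -/
def ParityObj {S : Type} (p : S → ℕ) : Set (ℕ → S) :=
  {π | Even (sInf (p '' infSet π))}

/-- Co-parity objective: the minimal priority occurring infinitely often is odd.
This is the complement of `ParityObj p`. -/
def CoparityObj {S : Type} (p : S → ℕ) : Set (ℕ → S) :=
  {π | Odd (sInf (p '' infSet π))}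

/-- Safety objective: only states of `F` are visited. -/
def SafeObj {S : Type} (F : Set S) : Set (ℕ → S) := {π | ∀ k : ℕ, π k ∈ F}

/-- Reachability objective: some state of `F` is visited. -/
def ReachObj {S : Type} (F : Set S) : Set (ℕ → S) := {π | ∃ k : ℕ, π k ∈ F}

/-- Büchi objective: some state of `F` is visited infinitely often. -/
def BuchiObj {S : Type} (F : Set S) : Set (ℕ → S) := {π | ∃ t ∈ F, t ∈ infSet π}

/-- A deterministic game graph: a finite directed graph in which every state
has at least one successor, together with the set `S1` of player-1 states
(the remaining states belong to player 2). -/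
structure DetGame (S : Type) [Fintype S] where
  E : S → S → Prop
  S1 : Set S
  exists_succ : ∀ s : S, ∃ t : S, E s t

namespace DetGame

variable {S : Type} [Fintype S]

/-- Player-2 states. -/
def S2 (G : DetGame S) : Set S := G.S1ᶜ

/-- A play: an infinite sequence of states following edges. -/
def IsPlay (G : DetGame S) (π : ℕ → S) : Prop := ∀ k : ℕ, G.E (π k) (π (k + 1))

/-- A strategy for player 1: given the history of states strictly before the
current state, and the current state, it chooses a successor, which must be
along an edge whenever the current state is a player-1 state. -/
structure Strat1 (G : DetGame S) where
  f : List S → S → S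
  valid : ∀ (h : List S) (s : S), s ∈ G.S1 → G.E s (f h s)

/-- A strategy for player 2. -/
structure Strat2 (G : DetGame S) where
  f : List S → S → S
  valid : ∀ (h : List S) (s : S), s ∈ G.S2 → G.E s (f h s)

/-- A memoryless strategy depends only on the current state. -/
def Strat1.Memoryless {G : DetGame S} (α : Strat1 G) : Prop :=
  ∀ (h h' : List S) (s : S), α.f h s = α.f h' s

def Strat2.Memoryless {G : DetGame S} (β : Strat2 G) : Prop :=
  ∀ (h h' : List S) (s : S), β.f h s = β.f h' s

/-- The (history, current state) pair after `k` steps of the play from `s`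
where player 1 follows `α` and player 2 follows `β`. -/
def histPair (G : DetGame S) (α : Strat1 G) (β : Strat2 G) (s : S) :
    ℕ → List S × S
  | 0 => ([], s)
  | k + 1 =>
    let p := histPair G α β s k
    (p.1 ++ [p.2], if p.2 ∈ G.S1 then α.f p.1 p.2 else β.f p.1 p.2)

/-- The unique play from `s` when player 1 follows `α` and player 2 follows `β`. -/
def outcome (G : DetGame S) (s : S) (α : Strat1 G) (β : Strat2 G) : ℕ → S :=
  fun k => (histPair G α β s k).2

/-- Sure winning set of player 1 for objective `Φ`. -/
def Win1 (G : DetGame S) (Φ : Set (ℕ → S)) : Set S :=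
  {s | ∃ α : Strat1 G, ∀ β : Strat2 G, G.outcome s α β ∈ Φ}

/-- Sure winning set of player 2 for objective `Φ`. -/
def Win2 (G : DetGame S) (Φ : Set (ℕ → S)) : Set S :=
  {s | ∃ β : Strat2 G, ∀ α : Strat1 G, G.outcome s α β ∈ Φ}

/-- Cooperative winning set: both players together can achieve `Φ`. -/
def Win12 (G : DetGame S) (Φ : Set (ℕ → S)) : Set S :=
  {s | ∃ (α : Strat1 G) (β : Strat2 G), G.outcome s α β ∈ Φ}

/-- The set of player-2 edges. -/
def E2 (G : DetGame S) : Set (S × S) := {e | G.E e.1 e.2 ∧ e.1 ∈ G.S2}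

/-- The objective "either some forbidden edge of `Es` is taken, or the play
remains in the safety component `Safe(Win12(Φ))` of `Φ`". -/
def AssumeSafe (G : DetGame S) (Es : Set (S × S)) (Φ : Set (ℕ → S)) :
    Set (ℕ → S) :=
  {π | (∃ i : ℕ, (π i, π (i + 1)) ∈ Es) ∨ π ∈ SafeObj (G.Win12 Φ)}

/-- A safety assumption `Es` is safe-sufficient for a state `s` and an
objective `Φ` if player 1 wins `AssumeSafe Es Φ` from `s`. -/
def SafeSufficient (G : DetGame S) (Es : Set (S × S)) (s : S)
    (Φ : Set (ℕ → S)) : Prop :=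
  s ∈ G.Win1 (G.AssumeSafe Es Φ)

/-- A safety assumption `Es` is restrictive for `s` and `Φ` if some pair of
strategies produces a play that uses an edge of `Es` and stays in the safety
component of `Φ`. -/
def Restrictive (G : DetGame S) (Es : Set (S × S)) (s : S)
    (Φ : Set (ℕ → S)) : Prop :=
  ∃ (α : Strat1 G) (β : Strat2 G),
    (∃ i : ℕ, (G.outcome s α β i, G.outcome s α β (i + 1)) ∈ Es) ∧
      G.outcome s α β ∈ SafeObj (G.Win12 Φ)

/-- The objective "either the strong fairness assumption on `El` is violated
(some source state of an edge in `El` repeats forever while the target of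
that edge does not), or `Φ` holds". -/
def AssumeFair (G : DetGame S) (El : Set (S × S)) (Φ : Set (ℕ → S)) :
    Set (ℕ → S) :=
  {π | (∃ e ∈ El, e.1 ∈ infSet π ∧ e.2 ∉ infSet π) ∨ π ∈ Φ}

end DetGame

/-! ### Auxiliary development: memoryless determinacy of parity games -/

namespace ZielonkaAux

open DetGame

variable {S : Type} [Fintype S]

/-- A canonical successor of a state. -/
noncomputable def junk (G : DetGame S) (s : S) : S := Classical.choose (G.exists_succ s)

lemma junk_edge (G : DetGame S) (s : S) : G.E s (junk G s) := Classical.choose_spec (G.exists_succ s)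

/-- A play consistent with the memoryless strategy `σ` for the player
controlling the states in `C`. -/
def Cons (G : DetGame S) (C : Set S) (σ : S → S) (π : ℕ → S) : Prop :=
  ∀ k, G.E (π k) (π (k + 1)) ∧ (π k ∈ C → π (k + 1) = σ (π k))

/-- `σ` (controlling `C`) surely achieves `Φ` from `s`. -/
def winsP (G : DetGame S) (C : Set S) (σ : S → S) (Φ : Set (ℕ → S)) (s : S) : Prop :=
  ∀ π : ℕ → S, π 0 = s → Cons G C σ π → π ∈ Φ

/-- Memoryless determinacy statement for the parity game `(G, p)`. -/
def Det (G : DetGame S) (p : S → ℕ) : Prop :=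
  ∃ σ1 σ2 : S → S, (∀ s ∈ G.S1, G.E s (σ1 s)) ∧ (∀ s ∈ G.S1ᶜ, G.E s (σ2 s)) ∧
    ∀ s : S, winsP G G.S1 σ1 (ParityObj p) s ∨ winsP G G.S1ᶜ σ2 (CoparityObj p) s

/-! #### Basic facts about `infSet` -/

lemma infSet_shift (π : ℕ → S) (N : ℕ) : infSet (fun k => π (k + N)) = infSet π := by
  ext t
  constructor
  · intro h M
    obtain ⟨k, hk, he⟩ := h M
    exact ⟨k + N, le_trans hk (Nat.le_add_right _ _), he⟩
  · intro h M
    obtain ⟨k, hk, he⟩ := h (M + N)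
    refine ⟨k - N, by omega, ?_⟩
    show π (k - N + N) = t
    have : k - N + N = k := by omega
    rw [this]; exact he

lemma exists_infSet_of_infinite (π : ℕ → S) (Q : Set S)
    (h : ∀ N : ℕ, ∃ k, N ≤ k ∧ π k ∈ Q) : ∃ t ∈ Q, t ∈ infSet π := by
  by_contra hc
  push_neg at hc
  -- for each t, if it eventually stops appearing, pick a bound
  have key : ∀ t : S, ∃ N : ℕ, t ∈ Q → ∀ k, N ≤ k → π k ≠ t := by
    intro t
    by_cases ht : t ∈ Q
    · have := hc t ht
      simp only [infSet, Set.mem_setOf_eq, not_forall] at this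
      obtain ⟨N, hN⟩ := this
      push_neg at hN
      exact ⟨N, fun _ k hk => hN k hk⟩
    · exact ⟨0, fun h' => absurd h' ht⟩
  choose f hf using key
  obtain ⟨k, hk, hkQ⟩ := h (Finset.univ.sup f)
  exact hf (π k) hkQ k (le_trans (Finset.le_sup (Finset.mem_univ _)) hk) rfl

lemma infSet_nonempty (π : ℕ → S) : (infSet π).Nonempty := by
  obtain ⟨t, _, ht⟩ := exists_infSet_of_infinite π Set.univ (fun N => ⟨N, le_refl N, trivial⟩)
  exact ⟨t, ht⟩

lemma parity_coparity_absurd {p : S → ℕ} {π : ℕ → S}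
    (h1 : π ∈ ParityObj p) (h2 : π ∈ CoparityObj p) : False :=
  (Nat.not_odd_iff_even.mpr h1) h2

/-- The infinitely-occurring states of a play inside a subtype. -/
lemma infSet_subtype {U : Set S} (π' : ℕ → U) :
    (fun u : U => (u : S)) '' infSet π' = infSet (fun k => ((π' k : S))) := by
  ext t
  constructor
  · rintro ⟨u, hu, rfl⟩ N
    obtain ⟨k, hk, he⟩ := hu N
    exact ⟨k, hk, by show ((π' k : S)) = _; rw [he]⟩
  · intro ht
    obtain ⟨k0, -, he0⟩ := ht 0
    have he0' : ((π' k0 : S)) = t := he0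
    refine ⟨π' k0, ?_, he0'⟩
    intro N
    obtain ⟨k, hk, he⟩ := ht N
    have he' : ((π' k : S)) = t := he
    exact ⟨k, hk, Subtype.ext (he'.trans he0'.symm)⟩

lemma image_infSet_subtype {U : Set S} (p : S → ℕ) (π : ℕ → S) (hm : ∀ k, π k ∈ U) :
    (fun u : U => p u) '' infSet (fun k => (⟨π k, hm k⟩ : U)) = p '' infSet π := by
  have h1 : (fun u : U => p u) = p ∘ (fun u : U => (u : S)) := rfl
  rw [h1, Set.image_comp, infSet_subtype]

/-! #### Attractors -/

/-- Iterated attractor of player controlling `C` towards target `T`. -/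
def attrN (G : DetGame S) (C T : Set S) : ℕ → Set S
  | 0 => T
  | n + 1 => attrN G C T n ∪
      {s | (s ∈ C ∧ ∃ t, G.E s t ∧ t ∈ attrN G C T n) ∨
           (s ∉ C ∧ ∀ t, G.E s t → t ∈ attrN G C T n)}

def Attr (G : DetGame S) (C T : Set S) : Set S := ⋃ n, attrN G C T n

lemma attrN_mono (G : DetGame S) (C T : Set S) {m n : ℕ} (h : m ≤ n) :
    attrN G C T m ⊆ attrN G C T n := by
  induction n with
  | zero => cases Nat.le_zero.mp h; exact subset_rfl
  | succ n ih =>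
    rcases Nat.lt_or_ge m (n+1) with h' | h'
    · exact subset_trans (ih (Nat.lt_succ_iff.mp h')) Set.subset_union_left
    · have : m = n + 1 := le_antisymm h h'
      subst this; exact subset_rfl

lemma T_subset_attr (G : DetGame S) (C T : Set S) : T ⊆ Attr G C T :=
  fun s hs => Set.mem_iUnion.mpr ⟨0, hs⟩

lemma attrN_subset_attr (G : DetGame S) (C T : Set S) (n : ℕ) :
    attrN G C T n ⊆ Attr G C T := fun s hs => Set.mem_iUnion.mpr ⟨n, hs⟩

/-- Rank of a state in the attractor. -/
noncomputable def rk (G : DetGame S) (C T : Set S) (s : S) : ℕ :=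
  sInf {n | s ∈ attrN G C T n}

lemma mem_attrN_rk (G : DetGame S) (C T : Set S) {s : S} (hs : s ∈ Attr G C T) :
    s ∈ attrN G C T (rk G C T s) := by
  obtain ⟨n, hn⟩ := Set.mem_iUnion.mp hs
  exact Nat.sInf_mem (⟨n, hn⟩ : Set.Nonempty {n | s ∈ attrN G C T n})

lemma rk_le (G : DetGame S) (C T : Set S) {s : S} {n : ℕ} (hs : s ∈ attrN G C T n) :
    rk G C T s ≤ n := Nat.sInf_le (show n ∈ {m | s ∈ attrN G C T m} from hs)

lemma rk_pos (G : DetGame S) (C T : Set S) {s : S} (hs : s ∈ Attr G C T) (hT : s ∉ T) :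
    1 ≤ rk G C T s := by
  by_contra h
  have h0 : rk G C T s = 0 := by omega
  have := mem_attrN_rk G C T hs
  rw [h0] at this
  exact hT this

/-- Attractor memoryless strategy. -/
noncomputable def aStr (G : DetGame S) (C T : Set S) (s : S) : S :=
  if h : ∃ t, G.E s t ∧ t ∈ attrN G C T (rk G C T s - 1) then Classical.choose h else junk G s

lemma aStr_edge (G : DetGame S) (C T : Set S) (s : S) : G.E s (aStr G C T s) := by
  by_cases h : ∃ t, G.E s t ∧ t ∈ attrN G C T (rk G C T s - 1)
  · rw [aStr, dif_pos h]; exact (Classical.choose_spec h).1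
  · rw [aStr, dif_neg h]; exact junk_edge G s

lemma aStr_mem (G : DetGame S) (C T : Set S) {s : S} (hC : s ∈ C) (hs : s ∈ Attr G C T)
    (hT : s ∉ T) : aStr G C T s ∈ attrN G C T (rk G C T s - 1) := by
  have h1 : 1 ≤ rk G C T s := rk_pos G C T hs hT
  have hmem : s ∈ attrN G C T (rk G C T s) := mem_attrN_rk G C T hs
  have hnot : s ∉ attrN G C T (rk G C T s - 1) := by
    intro hc
    have := rk_le G C T hc
    omega
  have heq : rk G C T s = (rk G C T s - 1) + 1 := by omega
  rw [heq] at hmem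
  rcases hmem with hmem | hmem
  · exact absurd hmem hnot
  · rcases hmem with ⟨_, t, het, htm⟩ | ⟨hnc, _⟩
    · have hex : ∃ t, G.E s t ∧ t ∈ attrN G C T (rk G C T s - 1) := ⟨t, het, htm⟩
      rw [aStr, dif_pos hex]
      exact (Classical.choose_spec hex).2
    · exact absurd hC hnc

/-- Any play consistent with the attractor strategy on `C ∩ (Attr \ T)` that
visits the attractor later visits the target. -/
lemma attr_reach (G : DetGame S) (C T : Set S) (π : ℕ → S)
    (hcons : ∀ k, G.E (π k) (π (k + 1)) ∧
      (π k ∈ C → π k ∈ Attr G C T → π k ∉ T → π (k + 1) = aStr G C T (π k))) :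
    ∀ k, π k ∈ Attr G C T → ∃ j, k ≤ j ∧ π j ∈ T := by
  have main : ∀ n k, π k ∈ Attr G C T → rk G C T (π k) ≤ n → ∃ j, k ≤ j ∧ π j ∈ T := by
    intro n
    induction n with
    | zero =>
      intro k hk hr
      have h0 : rk G C T (π k) = 0 := Nat.le_zero.mp hr
      have := mem_attrN_rk G C T hk
      rw [h0] at this
      exact ⟨k, le_refl k, this⟩
    | succ n ih =>
      intro k hk hr
      by_cases hT : π k ∈ T
      · exact ⟨k, le_refl k, hT⟩
      · have h1 : 1 ≤ rk G C T (π k) := rk_pos G C T hk hT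
        have hstep : π (k + 1) ∈ attrN G C T (rk G C T (π k) - 1) := by
          by_cases hC : π k ∈ C
          · rw [(hcons k).2 hC hk hT]
            exact aStr_mem G C T hC hk hT
          · have hmem := mem_attrN_rk G C T hk
            have heq : rk G C T (π k) = (rk G C T (π k) - 1) + 1 := by omega
            rw [heq] at hmem
            rcases hmem with hmem | hmem
            · exact absurd (rk_le G C T hmem) (by omega)
            · rcases hmem with ⟨hc, -⟩ | ⟨-, hall⟩
              · exact absurd hc hC
              · exact hall _ (hcons k).1
        have hA : π (k + 1) ∈ Attr G C T := attrN_subset_attr G C T _ hstep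
        have hr' : rk G C T (π (k + 1)) ≤ n := by
          have := rk_le G C T hstep
          omega
        obtain ⟨j, hj, hjT⟩ := ih (k + 1) hA hr'
        exact ⟨j, by omega, hjT⟩
  intro k hk
  exact main (rk G C T (π k)) k hk (le_refl _)

lemma attr_closed_C (G : DetGame S) (C T : Set S) {s t : S} (hC : s ∈ C) (he : G.E s t)
    (ht : t ∈ Attr G C T) : s ∈ Attr G C T := by
  obtain ⟨n, hn⟩ := Set.mem_iUnion.mp ht
  exact attrN_subset_attr G C T (n + 1) (Or.inr (Or.inl ⟨hC, t, he, hn⟩))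

lemma exists_succ_outside (G : DetGame S) (C T : Set S) {s : S} (hs : s ∉ Attr G C T) :
    ∃ t, t ∉ Attr G C T ∧ G.E s t := by
  by_contra h
  push_neg at h
  have h' : ∀ t, G.E s t → t ∈ Attr G C T := by
    intro t het
    by_contra hx
    exact h t hx het
  apply hs
  by_cases hC : s ∈ C
  · exact attr_closed_C G C T hC (junk_edge G s) (h' _ (junk_edge G s))
  · set N := Finset.univ.sup (rk G C T) with hN
    have hall : ∀ t, G.E s t → t ∈ attrN G C T N := by
      intro t het
      exact attrN_mono G C T (Finset.le_sup (Finset.mem_univ t)) (mem_attrN_rk G C T (h' t het))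
    exact attrN_subset_attr G C T (N + 1) (Or.inr (Or.inr ⟨hC, hall⟩))

/-! #### Subgames -/

/-- Subgame induced on a set `U` all of whose states have successors in `U`. -/
def subG (G : DetGame S) (U : Set S) (hU : ∀ s ∈ U, ∃ t, t ∈ U ∧ G.E s t) : DetGame U where
  E u v := G.E u v
  S1 := {u | (u : S) ∈ G.S1}
  exists_succ u := by
    obtain ⟨t, htU, he⟩ := hU u u.2
    exact ⟨⟨t, htU⟩, he⟩

/-! #### Joint plays and cross lemmas -/

/-- The play obtained when both players use their memoryless strategies. -/
def jp (G : DetGame S) (σ1 σ2 : S → S) (t : S) : ℕ → S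
  | 0 => t
  | k + 1 => let s := jp G σ1 σ2 t k; if s ∈ G.S1 then σ1 s else σ2 s

lemma jp_cons1 (G : DetGame S) (σ1 σ2 : S → S) (t : S)
    (v1 : ∀ s ∈ G.S1, G.E s (σ1 s)) (v2 : ∀ s ∈ G.S1ᶜ, G.E s (σ2 s)) :
    Cons G G.S1 σ1 (jp G σ1 σ2 t) := by
  intro k
  by_cases h : jp G σ1 σ2 t k ∈ G.S1
  · have he : jp G σ1 σ2 t (k + 1) = σ1 (jp G σ1 σ2 t k) := by
      show (if _ ∈ G.S1 then _ else _) = _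
      rw [if_pos h]
    exact ⟨by rw [he]; exact v1 _ h, fun _ => he⟩
  · have he : jp G σ1 σ2 t (k + 1) = σ2 (jp G σ1 σ2 t k) := by
      show (if _ ∈ G.S1 then _ else _) = _
      rw [if_neg h]
    exact ⟨by rw [he]; exact v2 _ h, fun hc => absurd hc h⟩

lemma jp_cons2 (G : DetGame S) (σ1 σ2 : S → S) (t : S)
    (v1 : ∀ s ∈ G.S1, G.E s (σ1 s)) (v2 : ∀ s ∈ G.S1ᶜ, G.E s (σ2 s)) :
    Cons G G.S1ᶜ σ2 (jp G σ1 σ2 t) := by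
  intro k
  refine ⟨(jp_cons1 G σ1 σ2 t v1 v2 k).1, fun h => ?_⟩
  show (if _ ∈ G.S1 then _ else _) = _
  rw [if_neg h]

/-- No state can be winning for one player while an edge consistent with the
other player's winning strategy leads to it from the other player's winning state. -/
lemma no_cross (G : DetGame S) (p : S → ℕ) (σ1 σ2 : S → S)
    (v1 : ∀ s ∈ G.S1, G.E s (σ1 s)) (v2 : ∀ s ∈ G.S1ᶜ, G.E s (σ2 s))
    {u t : S} (hu : winsP G G.S1ᶜ σ2 (CoparityObj p) u)
    (ht : winsP G G.S1 σ1 (ParityObj p) t)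
    (edge : G.E u t) (hmove : u ∈ G.S1ᶜ → t = σ2 u) : False := by
  set ρ := jp G σ1 σ2 t with hρ
  have hpar : ρ ∈ ParityObj p := ht ρ rfl (jp_cons1 G σ1 σ2 t v1 v2)
  set π : ℕ → S := fun k => Nat.casesOn k u (fun j => ρ j) with hπ
  have hπ0 : π 0 = u := rfl
  have hcons : Cons G G.S1ᶜ σ2 π := by
    intro k
    cases k with
    | zero =>
      refine ⟨edge, fun h => ?_⟩
      exact hmove h
    | succ k => exact jp_cons2 G σ1 σ2 t v1 v2 k
  have hcop : π ∈ CoparityObj p := hu π hπ0 hcons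
  have hshift : infSet ρ = infSet π := by
    have : (fun k => π (k + 1)) = ρ := rfl
    rw [← infSet_shift π 1, this]
  have hcop2 : Odd (sInf (p '' infSet π)) := hcop
  have hcop' : ρ ∈ CoparityObj p := by
    show Odd (sInf (p '' infSet ρ))
    rw [hshift]
    exact hcop2
  exact parity_coparity_absurd hpar hcop'

lemma no_cross' (G : DetGame S) (p : S → ℕ) (σ1 σ2 : S → S)
    (v1 : ∀ s ∈ G.S1, G.E s (σ1 s)) (v2 : ∀ s ∈ G.S1ᶜ, G.E s (σ2 s))
    {u t : S} (hu : winsP G G.S1 σ1 (ParityObj p) u)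
    (ht : winsP G G.S1ᶜ σ2 (CoparityObj p) t)
    (edge : G.E u t) (hmove : u ∈ G.S1 → t = σ1 u) : False := by
  set ρ := jp G σ1 σ2 t with hρ
  have hcop : ρ ∈ CoparityObj p := ht ρ rfl (jp_cons2 G σ1 σ2 t v1 v2)
  set π : ℕ → S := fun k => Nat.casesOn k u (fun j => ρ j) with hπ
  have hcons : Cons G G.S1 σ1 π := by
    intro k
    cases k with
    | zero => exact ⟨edge, fun h => hmove h⟩
    | succ k => exact jp_cons1 G σ1 σ2 t v1 v2 k
  have hpar : π ∈ ParityObj p := hu π rfl hcons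
  have hshift : infSet ρ = infSet π := by
    have : (fun k => π (k + 1)) = ρ := rfl
    rw [← infSet_shift π 1, this]
  have hpar2 : Even (sInf (p '' infSet π)) := hpar
  have hpar' : ρ ∈ ParityObj p := by
    show Even (sInf (p '' infSet ρ))
    rw [hshift]
    exact hpar2
  exact parity_coparity_absurd hpar' hcop

/-! #### Duality -/

/-- The dual game: the players swap roles. -/
def dual (G : DetGame S) : DetGame S where
  E := G.E
  S1 := G.S1ᶜ
  exists_succ := G.exists_succ

lemma sInf_succ_image {α : Type} (p : α → ℕ) (X : Set α) (hX : X.Nonempty) :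
    sInf ((fun s => p s + 1) '' X) = sInf (p '' X) + 1 := by
  have hne : (p '' X).Nonempty := hX.image p
  apply le_antisymm
  · obtain ⟨x, hx, he⟩ := (Set.mem_image _ _ _).mp (Nat.sInf_mem hne)
    exact Nat.sInf_le ⟨x, hx, by show p x + 1 = _; rw [he]⟩
  · apply le_csInf (hX.image _)
    rintro b ⟨x, hx, rfl⟩
    have : sInf (p '' X) ≤ p x := Nat.sInf_le ⟨x, hx, rfl⟩
    show _ ≤ p x + 1
    omega

lemma parity_dual (p : S → ℕ) (π : ℕ → S) :
    (π ∈ ParityObj (fun s => p s + 1)) ↔ π ∈ CoparityObj p := by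
  have h := sInf_succ_image p (infSet π) (infSet_nonempty π)
  rw [ParityObj, CoparityObj, Set.mem_setOf_eq, Set.mem_setOf_eq, h, Nat.even_add_one,
    Nat.not_even_iff_odd]

lemma coparity_dual (p : S → ℕ) (π : ℕ → S) :
    (π ∈ CoparityObj (fun s => p s + 1)) ↔ π ∈ ParityObj p := by
  have h := sInf_succ_image p (infSet π) (infSet_nonempty π)
  rw [ParityObj, CoparityObj, Set.mem_setOf_eq, Set.mem_setOf_eq, h, Nat.odd_add_one,
    Nat.not_odd_iff_even]

lemma det_dual (G : DetGame S) (p : S → ℕ)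
    (h : Det (dual G) (fun s => p s + 1)) : Det G p := by
  obtain ⟨σ1, σ2, v1, v2, hwin⟩ := h
  have hS1 : (dual G).S1 = G.S1ᶜ := rfl
  have hS1c : (dual G).S1ᶜ = G.S1 := compl_compl G.S1
  refine ⟨σ2, σ1, ?_, ?_, ?_⟩
  · intro s hs
    exact v2 s (by rw [hS1c]; exact hs)
  · intro s hs
    exact v1 s hs
  · intro s
    rcases hwin s with hw | hw
    · right
      intro π h0 hc
      exact (parity_dual p π).mp (hw π h0 hc)
    · left
      intro π h0 hc
      refine (coparity_dual p π).mp (hw π h0 ?_)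
      rw [hS1c]
      exact hc

/-! #### The Zielonka construction -/

lemma det_of_IH (G : DetGame S) (p : S → ℕ) (hne : Nonempty S)
    (heven : Even (sInf (p '' Set.univ)))
    (IH : ∀ (U : Set S), Uᶜ.Nonempty → ∀ (hU : ∀ s ∈ U, ∃ t, t ∈ U ∧ G.E s t),
      Det (subG G U hU) (fun u => p (u : S))) : Det G p := by
  classical
  set d := sInf (p '' Set.univ) with hd
  obtain ⟨s0, -, hs0⟩ := Nat.sInf_mem ((Set.univ_nonempty (α := S)).image p)
  set P : Set S := {s | p s = d} with hP
  have hs0P : s0 ∈ P := hs0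
  set A := Attr G G.S1 P with hA
  set U := Aᶜ with hUdef
  clear_value U
  have hPA : P ⊆ A := T_subset_attr G G.S1 P
  have hUc : Uᶜ.Nonempty := ⟨s0, by rw [hUdef, compl_compl]; exact hPA hs0P⟩
  have hU : ∀ s ∈ U, ∃ t, t ∈ U ∧ G.E s t := by
    rw [hUdef]
    intro s hs
    exact exists_succ_outside G G.S1 P hs
  obtain ⟨σ1', σ2', v1', v2', hdet'⟩ := IH U hUc hU
  set G' := subG G U hU with hG'
  have hUstep : ∀ {s t : S}, s ∈ U → s ∈ G.S1 → G.E s t → t ∈ U := by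
    intro s t hs h1 he
    rw [hUdef] at hs ⊢
    intro htA
    exact hs (attr_closed_C G G.S1 P h1 he htA)
  by_cases hW2 : ∃ u : U, winsP G' G'.S1ᶜ σ2' (CoparityObj fun u : U => p (u : S)) u
  · -- Case 2: player 2 wins somewhere in the subgame
    obtain ⟨u0, hu0⟩ := hW2
    set W2L : Set S :=
      {s | ∃ h : s ∈ U, winsP G' G'.S1ᶜ σ2' (CoparityObj fun u : U => p (u : S)) ⟨s, h⟩}
      with hW2L
    set B := Attr G G.S1ᶜ W2L with hB
    have hW2B : W2L ⊆ B := T_subset_attr G G.S1ᶜ W2L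
    have hu0W : (u0 : S) ∈ W2L := ⟨u0.2, hu0⟩
    have hBne : B.Nonempty := ⟨u0, hW2B hu0W⟩
    set U2 := Bᶜ with hU2def
    clear_value U2
    have hU2 : ∀ s ∈ U2, ∃ t, t ∈ U2 ∧ G.E s t := by
      rw [hU2def]
      intro s hs
      exact exists_succ_outside G G.S1ᶜ W2L hs
    have hU2c : U2ᶜ.Nonempty := by rw [hU2def, compl_compl]; exact hBne
    obtain ⟨σ1'', σ2'', v1'', v2'', hdet''⟩ := IH U2 hU2c hU2
    set G'' := subG G U2 hU2 with hG''
    have hU2step : ∀ {s t : S}, s ∈ U2 → s ∈ G.S1ᶜ → G.E s t → t ∈ U2 := by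
      intro s t hs h2 he
      rw [hU2def] at hs ⊢
      intro htB
      exact hs (attr_closed_C G G.S1ᶜ W2L h2 he htB)
    have w2'step : ∀ {u t : U}, winsP G' G'.S1ᶜ σ2' (CoparityObj fun u : U => p (u : S)) u →
        G'.E u t → (u ∈ G'.S1ᶜ → t = σ2' u) →
        winsP G' G'.S1ᶜ σ2' (CoparityObj fun u : U => p (u : S)) t := by
      intro u t hu he hm
      rcases hdet' t with h1 | h2
      · exact absurd (no_cross G' _ σ1' σ2' v1' v2' hu h1 he hm) (fun h => h)
      · exact h2
    have w1''step : ∀ {u t : U2}, winsP G'' G''.S1 σ1'' (ParityObj fun u : U2 => p (u : S)) u →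
        G''.E u t → (u ∈ G''.S1 → t = σ1'' u) →
        winsP G'' G''.S1 σ1'' (ParityObj fun u : U2 => p (u : S)) t := by
      intro u t hu he hm
      rcases hdet'' t with h1 | h2
      · exact h1
      · exact absurd (no_cross' G'' _ σ1'' σ2'' v1'' v2'' hu h2 he hm) (fun h => h)
    have w2''step : ∀ {u t : U2}, winsP G'' G''.S1ᶜ σ2'' (CoparityObj fun u : U2 => p (u : S)) u →
        G''.E u t → (u ∈ G''.S1ᶜ → t = σ2'' u) →
        winsP G'' G''.S1ᶜ σ2'' (CoparityObj fun u : U2 => p (u : S)) t := by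
      intro u t hu he hm
      rcases hdet'' t with h1 | h2
      · exact absurd (no_cross G'' _ σ1'' σ2'' v1'' v2'' hu h1 he hm) (fun h => h)
      · exact h2
    set σ1 : S → S := fun s => if h : s ∈ U2 then ((σ1'' ⟨s, h⟩ : U2) : S) else junk G s with hσ1
    set σ2 : S → S := fun s =>
      if h : s ∈ W2L then ((σ2' ⟨s, h.choose⟩ : U) : S)
      else if s ∈ B then aStr G G.S1ᶜ W2L s
      else if h2 : s ∈ U2 then ((σ2'' ⟨s, h2⟩ : U2) : S) else junk G s with hσ2
    have hσ1U : ∀ (s : S) (h : s ∈ U2), σ1 s = ((σ1'' ⟨s, h⟩ : U2) : S) := by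
      intro s h
      simp only [hσ1]
      rw [dif_pos h]
    have hσ1J : ∀ (s : S), s ∉ U2 → σ1 s = junk G s := by
      intro s h
      simp only [hσ1]
      rw [dif_neg h]
    have hσ2W : ∀ (s : S) (h : s ∈ W2L), σ2 s = ((σ2' ⟨s, h.choose⟩ : U) : S) := by
      intro s h
      simp only [hσ2]
      rw [dif_pos h]
    have hσ2B : ∀ (s : S), s ∉ W2L → s ∈ B → σ2 s = aStr G G.S1ᶜ W2L s := by
      intro s h hb
      simp only [hσ2]
      rw [dif_neg h, if_pos hb]
    have hσ2U2 : ∀ (s : S), s ∉ W2L → (h2 : s ∈ U2) → σ2 s = ((σ2'' ⟨s, h2⟩ : U2) : S) := by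
      intro s h h2
      have hb : s ∉ B := by rw [hU2def] at h2; exact h2
      simp only [hσ2]
      rw [dif_neg h, if_neg hb, dif_pos h2]
    -- W2L is absorbing for plays consistent with σ2
    have absorb : ∀ (π : ℕ → S), Cons G G.S1ᶜ σ2 π → ∀ k, π k ∈ W2L → π (k + 1) ∈ W2L := by
      intro π hπ k hk
      obtain ⟨hkU, hw⟩ := hk
      by_cases h1 : π k ∈ G.S1
      · have htU : π (k + 1) ∈ U := hUstep hkU h1 (hπ k).1
        have he' : G'.E ⟨π k, hkU⟩ ⟨π (k + 1), htU⟩ := (hπ k).1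
        exact ⟨htU, w2'step hw he' (fun hc => absurd h1 hc)⟩
      · have h1' : π k ∈ G.S1ᶜ := h1
        have heq : π (k + 1) = ((σ2' ⟨π k, hkU⟩ : U) : S) := by
          rw [(hπ k).2 h1', hσ2W (π k) ⟨hkU, hw⟩]
        have he' : G'.E ⟨π k, hkU⟩ (σ2' ⟨π k, hkU⟩) := v2' ⟨π k, hkU⟩ h1'
        have hwt := w2'step hw he' (fun _ => rfl)
        rw [heq]
        exact ⟨(σ2' ⟨π k, hkU⟩).2, hwt⟩
    -- from W2L, player 2 wins
    have winW2L : ∀ (π : ℕ → S), Cons G G.S1ᶜ σ2 π → ∀ k0, π k0 ∈ W2L →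
        π ∈ CoparityObj p := by
      intro π hπ k0 hk0
      have hall : ∀ j, π (j + k0) ∈ W2L := by
        intro j
        induction j with
        | zero => rw [Nat.zero_add]; exact hk0
        | succ j ihj =>
          have h' : j + 1 + k0 = (j + k0) + 1 := by omega
          rw [h']
          exact absorb π hπ (j + k0) ihj
      have hmem : ∀ j, π (j + k0) ∈ U := fun j => (hall j).choose
      have hcons' : Cons G' G'.S1ᶜ σ2' (fun j => (⟨π (j + k0), hmem j⟩ : U)) := by
        intro j
        constructor
        · show G.E (π (j + k0)) (π (j + 1 + k0))
          have h' : j + 1 + k0 = (j + k0) + 1 := by omega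
          rw [h']
          exact (hπ (j + k0)).1
        · intro hmem2
          apply Subtype.ext
          show π (j + 1 + k0) = ((σ2' ⟨π (j + k0), hmem j⟩ : U) : S)
          have h2 : π (j + k0) ∈ G.S1ᶜ := hmem2
          have h' : j + 1 + k0 = (j + k0) + 1 := by omega
          rw [h', (hπ (j + k0)).2 h2, hσ2W (π (j + k0)) (hall j)]
      have hwin := (hall 0).choose_spec (fun j => (⟨π (j + k0), hmem j⟩ : U)) rfl hcons'
      show Odd (sInf (p '' infSet π))
      rw [← infSet_shift π k0, ← image_infSet_subtype p (fun j => π (j + k0)) hmem]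
      exact hwin
    refine ⟨σ1, σ2, ?_, ?_, ?_⟩
    · -- validity of σ1
      intro s hs
      by_cases h : s ∈ U2
      · rw [hσ1U s h]
        exact v1'' ⟨s, h⟩ hs
      · rw [hσ1J s h]
        exact junk_edge G s
    · -- validity of σ2
      intro s hs
      by_cases h : s ∈ W2L
      · rw [hσ2W s h]
        exact v2' ⟨s, h.choose⟩ hs
      · by_cases hb : s ∈ B
        · rw [hσ2B s h hb]
          exact aStr_edge G G.S1ᶜ W2L s
        · have h2 : s ∈ U2 := by rw [hU2def]; exact hb
          rw [hσ2U2 s h h2]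
          exact v2'' ⟨s, h2⟩ hs
    · -- winning
      intro s
      by_cases hsB : s ∈ B
      · -- player 2 wins from B
        right
        intro π h0 hπ
        have hreach : ∃ j, 0 ≤ j ∧ π j ∈ W2L := by
          apply attr_reach G G.S1ᶜ W2L π ?_ 0 (by rw [h0]; exact hsB)
          intro k
          refine ⟨(hπ k).1, fun hC hkB hkW => ?_⟩
          rw [(hπ k).2 hC, hσ2B (π k) hkW hkB]
        obtain ⟨j, -, hj⟩ := hreach
        exact winW2L π hπ j hj
      · have hsU2 : s ∈ U2 := by rw [hU2def]; exact hsB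
        rcases hdet'' ⟨s, hsU2⟩ with hw1 | hw2
        · -- player 1 wins from W1''
          left
          intro π h0 hπ
          -- the play never leaves the lifted W1''
          have hinv : ∀ k, ∃ h : π k ∈ U2,
              winsP G'' G''.S1 σ1'' (ParityObj fun u : U2 => p (u : S)) ⟨π k, h⟩ := by
            intro k
            induction k with
            | zero =>
              refine ⟨by rw [h0]; exact hsU2, ?_⟩
              have : π 0 = s := h0
              subst this
              exact hw1
            | succ k ihk =>
              obtain ⟨hkU2, hw⟩ := ihk
              by_cases h1 : π k ∈ G.S1
              · have heq : π (k + 1) = ((σ1'' ⟨π k, hkU2⟩ : U2) : S) := by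
                  rw [(hπ k).2 h1, hσ1U (π k) hkU2]
                have he' : G''.E ⟨π k, hkU2⟩ (σ1'' ⟨π k, hkU2⟩) := v1'' ⟨π k, hkU2⟩ h1
                have hwt := w1''step hw he' (fun _ => rfl)
                rw [heq]
                exact ⟨(σ1'' ⟨π k, hkU2⟩).2, hwt⟩
              · have h1' : π k ∈ G.S1ᶜ := h1
                have htU2 : π (k + 1) ∈ U2 := hU2step hkU2 h1' (hπ k).1
                have he' : G''.E ⟨π k, hkU2⟩ ⟨π (k + 1), htU2⟩ := (hπ k).1
                exact ⟨htU2, w1''step hw he' (fun hc => absurd hc h1)⟩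
          have hmem : ∀ k, π k ∈ U2 := fun k => (hinv k).choose
          have hcons' : Cons G'' G''.S1 σ1'' (fun k => (⟨π k, hmem k⟩ : U2)) := by
            intro k
            refine ⟨(hπ k).1, fun h1 => ?_⟩
            apply Subtype.ext
            show π (k + 1) = ((σ1'' ⟨π k, hmem k⟩ : U2) : S)
            rw [(hπ k).2 h1, hσ1U (π k) (hmem k)]
          have hwin := (hinv 0).choose_spec (fun k => (⟨π k, hmem k⟩ : U2)) rfl hcons'
          show Even (sInf (p '' infSet π))
          rw [← image_infSet_subtype p π hmem]
          exact hwin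
        · -- player 2 wins from W2''
          right
          intro π h0 hπ
          by_cases hhit : ∃ k, π k ∈ B
          · obtain ⟨k, hk⟩ := hhit
            have hreach : ∃ j, k ≤ j ∧ π j ∈ W2L := by
              apply attr_reach G G.S1ᶜ W2L π ?_ k hk
              intro m
              refine ⟨(hπ m).1, fun hC hmB hmW => ?_⟩
              rw [(hπ m).2 hC, hσ2B (π m) hmW hmB]
            obtain ⟨j, -, hj⟩ := hreach
            exact winW2L π hπ j hj
          · push_neg at hhit
            have hmemB : ∀ k, π k ∈ U2 := fun k => by rw [hU2def]; exact hhit k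
            have hinv : ∀ k, ∃ h : π k ∈ U2,
                winsP G'' G''.S1ᶜ σ2'' (CoparityObj fun u : U2 => p (u : S)) ⟨π k, h⟩ := by
              intro k
              induction k with
              | zero =>
                refine ⟨by rw [h0]; exact hsU2, ?_⟩
                have : π 0 = s := h0
                subst this
                exact hw2
              | succ k ihk =>
                obtain ⟨hkU2, hw⟩ := ihk
                by_cases h1 : π k ∈ G.S1
                · have he' : G''.E ⟨π k, hkU2⟩ ⟨π (k + 1), hmemB (k + 1)⟩ := (hπ k).1
                  exact ⟨hmemB (k + 1), w2''step hw he' (fun hc => absurd h1 hc)⟩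
                · have h1' : π k ∈ G.S1ᶜ := h1
                  have hkW : π k ∉ W2L := fun hc => hhit k (hW2B hc)
                  have heq : π (k + 1) = ((σ2'' ⟨π k, hkU2⟩ : U2) : S) := by
                    rw [(hπ k).2 h1', hσ2U2 (π k) hkW hkU2]
                  have he' : G''.E ⟨π k, hkU2⟩ (σ2'' ⟨π k, hkU2⟩) := v2'' ⟨π k, hkU2⟩ h1'
                  have hwt := w2''step hw he' (fun _ => rfl)
                  rw [heq]
                  exact ⟨(σ2'' ⟨π k, hkU2⟩).2, hwt⟩
            have hmem : ∀ k, π k ∈ U2 := fun k => (hinv k).choose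
            have hcons' : Cons G'' G''.S1ᶜ σ2'' (fun k => (⟨π k, hmem k⟩ : U2)) := by
              intro k
              refine ⟨(hπ k).1, fun h1 => ?_⟩
              apply Subtype.ext
              show π (k + 1) = ((σ2'' ⟨π k, hmem k⟩ : U2) : S)
              have h1' : π k ∈ G.S1ᶜ := h1
              have hkW : π k ∉ W2L := fun hc => hhit k (hW2B hc)
              rw [(hπ k).2 h1', hσ2U2 (π k) hkW (hmem k)]
            have hwin := (hinv 0).choose_spec (fun k => (⟨π k, hmem k⟩ : U2)) rfl hcons'
            show Odd (sInf (p '' infSet π))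
            rw [← image_infSet_subtype p π hmem]
            exact hwin
  · -- Case 1: player 1 wins everywhere in the subgame
    have hW1 : ∀ u : U, winsP G' G'.S1 σ1' (ParityObj fun u : U => p (u : S)) u :=
      fun u => (hdet' u).resolve_right (fun h => hW2 ⟨u, h⟩)
    set σ1 : S → S := fun s => if h : s ∈ U then ((σ1' ⟨s, h⟩ : U) : S)
      else if s ∈ P then junk G s else aStr G G.S1 P s with hσ1
    have hσ1U : ∀ (s : S) (h : s ∈ U), σ1 s = ((σ1' ⟨s, h⟩ : U) : S) := by
      intro s h
      simp only [hσ1]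
      rw [dif_pos h]
    have hσ1A : ∀ (s : S), s ∉ U → s ∉ P → σ1 s = aStr G G.S1 P s := by
      intro s h hp
      simp only [hσ1]
      rw [dif_neg h, if_neg hp]
    have hσ1P : ∀ (s : S), s ∉ U → s ∈ P → σ1 s = junk G s := by
      intro s h hp
      simp only [hσ1]
      rw [dif_neg h, if_pos hp]
    refine ⟨σ1, junk G, ?_, fun s _ => junk_edge G s, ?_⟩
    · intro s hs
      by_cases h : s ∈ U
      · rw [hσ1U s h]
        exact v1' ⟨s, h⟩ hs
      · by_cases hp : s ∈ P
        · rw [hσ1P s h hp]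
          exact junk_edge G s
        · rw [hσ1A s h hp]
          exact aStr_edge G G.S1 P s
    · intro s
      left
      intro π h0 hπ
      by_cases hinf : ∀ N, ∃ k, N ≤ k ∧ π k ∈ A
      · -- the play visits P infinitely often; minimal priority d is even
        have hPinf : ∀ N, ∃ k, N ≤ k ∧ π k ∈ P := by
          intro N
          obtain ⟨k, hk, hkA⟩ := hinf N
          have hreach : ∃ j, k ≤ j ∧ π j ∈ P := by
            apply attr_reach G G.S1 P π ?_ k hkA
            intro m
            refine ⟨(hπ m).1, fun hC hmA hmP => ?_⟩
            have hmU : π m ∉ U := by rw [hUdef]; exact fun hu => hu hmA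
            rw [(hπ m).2 hC, hσ1A (π m) hmU hmP]
          obtain ⟨j, hj, hjP⟩ := hreach
          exact ⟨j, le_trans hk hj, hjP⟩
        obtain ⟨t, htP, htinf⟩ := exists_infSet_of_infinite π P hPinf
        show Even (sInf (p '' infSet π))
        have heq : sInf (p '' infSet π) = d := by
          apply le_antisymm
          · exact Nat.sInf_le ⟨t, htinf, htP⟩
          · refine le_csInf ⟨p t, ⟨t, htinf, rfl⟩⟩ ?_
            rintro b ⟨y, hy, rfl⟩
            exact Nat.sInf_le ⟨y, trivial, rfl⟩
        rw [heq]
        exact heven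
      · -- the play eventually stays in the subgame
        push_neg at hinf
        obtain ⟨N, hN⟩ := hinf
        have hmem : ∀ k, π (k + N) ∈ U := fun k => by
          rw [hUdef]; exact hN (k + N) (by omega)
        have hcons' : Cons G' G'.S1 σ1' (fun k => (⟨π (k + N), hmem k⟩ : U)) := by
          intro k
          constructor
          · show G.E (π (k + N)) (π (k + 1 + N))
            have h' : k + 1 + N = (k + N) + 1 := by omega
            rw [h']
            exact (hπ (k + N)).1
          · intro h1
            apply Subtype.ext
            show π (k + 1 + N) = ((σ1' ⟨π (k + N), hmem k⟩ : U) : S)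
            have h1' : π (k + N) ∈ G.S1 := h1
            have h' : k + 1 + N = (k + N) + 1 := by omega
            rw [h', (hπ (k + N)).2 h1', hσ1U (π (k + N)) (hmem k)]
        have hwin := hW1 ⟨π (0 + N), hmem 0⟩ (fun k => (⟨π (k + N), hmem k⟩ : U)) rfl hcons'
        show Even (sInf (p '' infSet π))
        rw [← infSet_shift π N, ← image_infSet_subtype p (fun k => π (k + N)) hmem]
        exact hwin

/-! #### The main induction -/

lemma det_all : ∀ (n : ℕ) (S : Type) (_ : Fintype S) (G : DetGame S) (p : S → ℕ),
    Fintype.card S ≤ n → Det G p := by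
  intro n
  induction n with
  | zero =>
    intro S _ G p hcard
    have hem : IsEmpty S := Fintype.card_eq_zero_iff.mp (Nat.le_zero.mp hcard)
    exact ⟨junk G, junk G, fun s _ => junk_edge G s, fun s _ => junk_edge G s,
      fun s => (hem.false s).elim⟩
  | succ n ih =>
    intro S instS G p hcard
    by_cases hem : IsEmpty S
    · exact ⟨junk G, junk G, fun s _ => junk_edge G s, fun s _ => junk_edge G s,
        fun s => (hem.false s).elim⟩
    · have hne : Nonempty S := not_isEmpty_iff.mp hem
      have key : ∀ (G0 : DetGame S) (q : S → ℕ) (U : Set S), Uᶜ.Nonempty →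
          ∀ (hU : ∀ s ∈ U, ∃ t, t ∈ U ∧ G0.E s t),
          Det (subG G0 U hU) (fun u => q (u : S)) := by
        intro G0 q U hUc hU
        obtain ⟨x, hx⟩ := hUc
        have hlt : Fintype.card U < Fintype.card S :=
          Fintype.card_subtype_lt (p := fun y => y ∈ U) (x := x) hx
        exact ih (U : Set S) inferInstance (subG G0 U hU) (fun u => q (u : S)) (by omega)
      rcases Nat.even_or_odd (sInf (p '' Set.univ)) with he | ho
      · exact det_of_IH G p hne he (key G p)
      · apply det_dual
        apply det_of_IH (dual G) (fun s => p s + 1) hne ?_ (key (dual G) (fun s => p s + 1))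
        rw [sInf_succ_image p Set.univ Set.univ_nonempty]
        rw [Nat.even_add_one, Nat.not_even_iff_odd]
        exact ho

/-! #### From memoryless strategies to general strategies -/

lemma outcome_play0 (G : DetGame S) (s : S) (α : DetGame.Strat1 G) (β : DetGame.Strat2 G) :
    G.outcome s α β 0 = s := rfl

lemma outcome_succ (G : DetGame S) (s : S) (α : DetGame.Strat1 G) (β : DetGame.Strat2 G)
    (k : ℕ) : G.outcome s α β (k + 1) =
      if G.outcome s α β k ∈ G.S1
        then α.f (G.histPair α β s k).1 (G.outcome s α β k)
        else β.f (G.histPair α β s k).1 (G.outcome s α β k) := rfl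

lemma outcome_cons1 (G : DetGame S) (σ1 : S → S) (v1 : ∀ s ∈ G.S1, G.E s (σ1 s)) (s : S)
    (β : DetGame.Strat2 G) :
    Cons G G.S1 σ1 (G.outcome s ⟨fun _ t => σ1 t, fun _ t ht => v1 t ht⟩ β) := by
  set α : DetGame.Strat1 G := ⟨fun _ t => σ1 t, fun _ t ht => v1 t ht⟩ with hα
  intro k
  rw [outcome_succ G s α β k]
  by_cases h : G.outcome s α β k ∈ G.S1
  · rw [if_pos h]
    exact ⟨v1 _ h, fun _ => rfl⟩
  · rw [if_neg h]
    exact ⟨β.valid _ _ h, fun hc => absurd hc h⟩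

lemma outcome_cons2 (G : DetGame S) (σ2 : S → S) (v2 : ∀ s ∈ G.S1ᶜ, G.E s (σ2 s)) (s : S)
    (α : DetGame.Strat1 G) :
    Cons G G.S1ᶜ σ2 (G.outcome s α ⟨fun _ t => σ2 t, fun _ t ht => v2 t ht⟩) := by
  set β : DetGame.Strat2 G := ⟨fun _ t => σ2 t, fun _ t ht => v2 t ht⟩ with hβ
  intro k
  rw [outcome_succ G s α β k]
  by_cases h : G.outcome s α β k ∈ G.S1
  · rw [if_pos h]
    exact ⟨α.valid _ _ h, fun hc => absurd h hc⟩
  · rw [if_neg h]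
    exact ⟨v2 _ h, fun _ => rfl⟩

end ZielonkaAux
theorem parity_determinacy {S : Type} [Fintype S] (G : DetGame S) (p : S → ℕ) :
    G.Win1 (ParityObj p) = (G.Win2 (CoparityObj p))ᶜ := by
  classical
  obtain ⟨σ1, σ2, v1, v2, hwin⟩ :=
    ZielonkaAux.det_all (Fintype.card S) S inferInstance G p le_rfl
  ext s
  simp only [Set.mem_compl_iff]
  constructor
  · intro h1 h2
    obtain ⟨α, hα⟩ := h1
    obtain ⟨β, hβ⟩ := h2
    exact ZielonkaAux.parity_coparity_absurd (hα β) (hβ α)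
  · intro h2
    rcases hwin s with hw | hw
    · refine ⟨⟨fun _ t => σ1 t, fun _ t ht => v1 t ht⟩, fun β => ?_⟩
      exact hw _ (ZielonkaAux.outcome_play0 G s _ β) (ZielonkaAux.outcome_cons1 G σ1 v1 s β)
    · exact absurd ⟨⟨fun _ t => σ2 t, fun _ t ht => v2 t ht⟩, fun α =>
        hw _ (ZielonkaAux.outcome_play0 G s α _) (ZielonkaAux.outcome_cons2 G σ2 v2 s α)⟩ h2
end
end

section
/- For every finite deterministic game graph G = ((S,E),(S1,S2)) and every priority function p : S → ℕ, memoryless sure winning strategies exist for both players from their sure winning sets: there is a memoryless player-1 strategy α such that for every s ∈ Win1(Parity(p)) and every player-2 strategy β, Outcome(s,α,β) ∈ Parity(p); and there is a memoryless player-2 strategy β such that for every s ∈ Win2(coParity(p)) and every player-1 strategy α, Outcome(s,α,β) ∈ coParity(p), where coParity(p) is the complement of Parity(p). -/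
open scoped Classical
noncomputable section

set_option linter.unusedSectionVars false

namespace ZielonkaProof

variable {S : Type} [Fintype S]

/-- A play guided by player `Q` using memoryless strategy `g`: at `Q`-states the
next state is `g` of the current one; at other states it is any `E`-successor. -/
def Guided (E : S → S → Prop) (Q : Set S) (g : S → S) (π : ℕ → S) : Prop :=
  ∀ k : ℕ, (π k ∈ Q → π (k + 1) = g (π k)) ∧ (π k ∉ Q → E (π k) (π (k + 1)))

lemma guided_shift {E : S → S → Prop} {Q : Set S} {g : S → S} {π : ℕ → S}
    (h : Guided E Q g π) (N : ℕ) : Guided E Q g (fun k => π (k + N)) := by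
  intro k
  have h1 : k + 1 + N = (k + N) + 1 := by omega
  constructor
  · intro hk
    show π (k + 1 + N) = _
    rw [h1]
    exact (h (k + N)).1 hk
  · intro hk
    show E _ (π (k + 1 + N))
    rw [h1]
    exact (h (k + N)).2 hk

lemma infSet_shift (π : ℕ → S) (N : ℕ) : infSet (fun k => π (k + N)) = infSet π := by
  ext t
  constructor
  · intro h M
    obtain ⟨k, hk, he⟩ := h M
    exact ⟨k + N, by omega, he⟩
  · intro h M
    obtain ⟨k, hk, he⟩ := h (M + N)
    refine ⟨k - N, by omega, ?_⟩
    show π (k - N + N) = t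
    have : k - N + N = k := by omega
    rw [this]; exact he

lemma infSet_subset {π : ℕ → S} {U : Set S} (h : ∀ k, π k ∈ U) : infSet π ⊆ U := by
  intro t ht
  obtain ⟨k, _, he⟩ := ht 0
  rw [← he]; exact h k

lemma exists_infSet_of_frequently (F : Set S) (π : ℕ → S)
    (h : ∀ N : ℕ, ∃ k, N ≤ k ∧ π k ∈ F) : ∃ s ∈ F, s ∈ infSet π := by
  by_contra hc
  push_neg at hc
  -- each fiber is finite
  have hfib : ∀ s ∈ F, {k : ℕ | π k = s}.Finite := by
    intro s hs
    by_contra hinf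
    refine hc s hs ?_
    intro N
    obtain ⟨k, hk, hlt⟩ := Set.Infinite.exists_gt hinf N
    exact ⟨k, le_of_lt hlt, hk⟩
  have hK : {k : ℕ | π k ∈ F}.Finite := by
    have hsub : {k : ℕ | π k ∈ F} ⊆ ⋃ s ∈ F, {k : ℕ | π k = s} := by
      intro k hk
      exact Set.mem_biUnion hk rfl
    exact (Set.Finite.biUnion (Set.toFinite F) hfib).subset hsub
  obtain ⟨N, hN⟩ := hK.bddAbove
  obtain ⟨k, hk, hkF⟩ := h (N + 1)
  have := hN hkF
  omega

lemma infSet_nonempty (π : ℕ → S) : (infSet π).Nonempty := by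
  obtain ⟨s, _, hs⟩ := exists_infSet_of_frequently Set.univ π (fun N => ⟨N, le_refl N, trivial⟩)
  exact ⟨s, hs⟩

lemma sInf_image_add_one {X : Set ℕ} (h : X.Nonempty) :
    sInf ((fun n => n + 1) '' X) = sInf X + 1 := by
  have h' : ((fun n => n + 1) '' X).Nonempty := h.image _
  apply le_antisymm
  · exact Nat.sInf_le ⟨sInf X, Nat.sInf_mem h, rfl⟩
  · obtain ⟨x, hx, he⟩ := Nat.sInf_mem h'
    rw [← he]
    exact Nat.add_le_add_right (Nat.sInf_le hx) 1


/-! ### Attractors -/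

variable (E : S → S → Prop)

/-- Stages of the attractor of player `Q` to target `T` within arena `U`. -/
def AttrN (Q U T : Set S) : ℕ → Set S
  | 0 => T
  | n + 1 => AttrN Q U T n ∪
      {s | s ∈ U ∧ ((s ∈ Q ∧ ∃ t ∈ AttrN Q U T n, E s t) ∨
        (s ∉ Q ∧ ∀ t ∈ U, E s t → t ∈ AttrN Q U T n))}

/-- The attractor of player `Q` to target `T` within arena `U`. -/
def Attr (Q U T : Set S) : Set S := ⋃ n, AttrN E Q U T n

variable {E}

lemma attrN_mono {Q U T : Set S} : Monotone (AttrN E Q U T) := by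
  apply monotone_nat_of_le_succ
  intro n
  exact Set.subset_union_left

lemma attrN_subset_attr {Q U T : Set S} (n : ℕ) : AttrN E Q U T n ⊆ Attr E Q U T :=
  Set.subset_iUnion (AttrN E Q U T) n

lemma target_subset_attr {Q U T : Set S} : T ⊆ Attr E Q U T :=
  attrN_subset_attr 0

lemma attrN_subset_arena {Q U T : Set S} (hT : T ⊆ U) (n : ℕ) : AttrN E Q U T n ⊆ U := by
  induction n with
  | zero => exact hT
  | succ n ih =>
    intro s hs
    rcases hs with hs | hs
    · exact ih hs
    · exact hs.1

lemma attr_subset_arena {Q U T : Set S} (hT : T ⊆ U) : Attr E Q U T ⊆ U := by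
  intro s hs
  obtain ⟨n, hn⟩ := Set.mem_iUnion.mp hs
  exact attrN_subset_arena hT n hn

/-- The attractor stages stabilize. -/
lemma attr_stab {Q U T : Set S} : ∃ N, Attr E Q U T = AttrN E Q U T N := by
  have key : ∃ N, AttrN E Q U T (N + 1) = AttrN E Q U T N := by
    by_contra hc
    push_neg at hc
    have hmono : StrictMono (fun n => (AttrN E Q U T n).ncard) := by
      apply strictMono_nat_of_lt_succ
      intro n
      apply Set.ncard_lt_ncard _ (Set.toFinite _)
      exact Set.ssubset_iff_subset_ne.mpr ⟨Set.subset_union_left, (hc n).symm⟩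
    have h1 := hmono.le_apply (x := Fintype.card S + 1)
    have h2 : (AttrN E Q U T (Fintype.card S + 1)).ncard ≤ Fintype.card S := by
      have := Set.ncard_le_ncard (Set.subset_univ (AttrN E Q U T (Fintype.card S + 1)))
        (Set.toFinite _)
      simpa [Set.ncard_univ] using this
    omega
  obtain ⟨N, hN⟩ := key
  refine ⟨N, ?_⟩
  have hstable : ∀ m, AttrN E Q U T (N + m) = AttrN E Q U T N := by
    intro m
    induction m with
    | zero => rfl
    | succ m ih =>
      have : N + (m + 1) = (N + m) + 1 := by omega
      rw [this]
      show AttrN E Q U T (N + m) ∪ _ = _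
      rw [ih]
      exact hN
  apply Set.Subset.antisymm
  · intro s hs
    obtain ⟨n, hn⟩ := Set.mem_iUnion.mp hs
    rcases le_or_gt n N with h | h
    · exact attrN_mono h hn
    · have : N + (n - N) = n := by omega
      rw [← hstable (n - N), this]
      exact hn
  · exact attrN_subset_attr N

lemma attr_closed_mem {Q U T : Set S} {s t : S} (hsU : s ∈ U) (hsQ : s ∈ Q)
    (hE : E s t) (ht : t ∈ Attr E Q U T) : s ∈ Attr E Q U T := by
  obtain ⟨n, hn⟩ := Set.mem_iUnion.mp ht
  apply attrN_subset_attr (n + 1)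
  exact Or.inr ⟨hsU, Or.inl ⟨hsQ, t, hn, hE⟩⟩

lemma attr_closed_all {Q U T : Set S} {s : S} (hsU : s ∈ U) (hsQ : s ∉ Q)
    (h : ∀ t ∈ U, E s t → t ∈ Attr E Q U T) : s ∈ Attr E Q U T := by
  obtain ⟨N, hN⟩ := attr_stab (E := E) (Q := Q) (U := U) (T := T)
  apply attrN_subset_attr (N + 1)
  refine Or.inr ⟨hsU, Or.inr ⟨hsQ, ?_⟩⟩
  intro t htU hE
  rw [← hN]
  exact h t htU hE

/-- The rank of a state in the attractor. -/
def attrRk (Q U T : Set S) (s : S) : ℕ := sInf {n | s ∈ AttrN E Q U T n}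

variable (E)

lemma attr_exists {Q U T : Set S} {s : S} (hsQ : s ∈ Q) (hsA : s ∈ Attr E Q U T)
    (hsT : s ∉ T) : ∃ t, E s t ∧ t ∈ AttrN E Q U T (attrRk (E := E) Q U T s - 1) := by
  have hne : {n | s ∈ AttrN E Q U T n}.Nonempty := Set.mem_iUnion.mp hsA
  have hmem : s ∈ AttrN E Q U T (attrRk (E := E) Q U T s) := Nat.sInf_mem hne
  set r := attrRk (E := E) Q U T s with hr
  have hrpos : r ≠ 0 := by
    intro h0
    rw [h0] at hmem
    exact hsT hmem
  have hnot : s ∉ AttrN E Q U T (r - 1) := by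
    intro hmem'
    have : r ≤ r - 1 := Nat.sInf_le hmem'
    omega
  have : r = (r - 1) + 1 := by omega
  rw [this] at hmem
  rcases hmem with hmem | hmem
  · exact absurd hmem hnot
  · rcases hmem.2 with ⟨_, t, htA, hE⟩ | ⟨hQ, _⟩
    · exact ⟨t, hE, htA⟩
    · exact absurd hsQ hQ

lemma attr_succ_of_notQ {Q U T : Set S} {s : S} (hsQ : s ∉ Q) (hsA : s ∈ Attr E Q U T)
    (hsT : s ∉ T) : ∀ t ∈ U, E s t → t ∈ Attr E Q U T := by
  have hne : {n | s ∈ AttrN E Q U T n}.Nonempty := Set.mem_iUnion.mp hsA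
  have hmem : s ∈ AttrN E Q U T (attrRk (E := E) Q U T s) := Nat.sInf_mem hne
  set r := attrRk (E := E) Q U T s with hr
  have hrpos : r ≠ 0 := by
    intro h0
    rw [h0] at hmem
    exact hsT hmem
  have hnot : s ∉ AttrN E Q U T (r - 1) := by
    intro hmem'
    have : r ≤ r - 1 := Nat.sInf_le hmem'
    omega
  have heq : r = (r - 1) + 1 := by omega
  rw [heq] at hmem
  rcases hmem with hmem | hmem
  · exact absurd hmem hnot
  · rcases hmem.2 with ⟨hQ, _⟩ | ⟨_, hall⟩
    · exact absurd hQ hsQ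
    · intro t htU hE
      exact attrN_subset_attr (r - 1) (hall t htU hE)

/-- Complement of an attractor is a non-blocking subarena. -/
lemma nonblocking_diff_attr {Q U T : Set S} (hU : ∀ s ∈ U, ∃ t ∈ U, E s t) :
    ∀ s ∈ U \ Attr E Q U T, ∃ t ∈ U \ Attr E Q U T, E s t := by
  rintro s ⟨hsU, hsA⟩
  by_contra hc
  push_neg at hc
  apply hsA
  by_cases hsQ : s ∈ Q
  · obtain ⟨t, htU, hE⟩ := hU s hsU
    have htA : t ∈ Attr E Q U T := by
      by_contra htA
      exact hc t ⟨htU, htA⟩ hE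
    exact attr_closed_mem hsU hsQ hE htA
  · apply attr_closed_all hsU hsQ
    intro t htU hE
    by_contra htA
    exact hc t ⟨htU, htA⟩ hE

/-- Reachability along attractor: any play guided by `Q` using a strategy that
descends in attractor rank reaches the target. -/
lemma attr_reach {Q U T : Set S} {g : S → S}
    (hg : ∀ s, s ∈ Q → ∀ r : ℕ, s ∈ AttrN E Q U T (r + 1) → s ∉ AttrN E Q U T r →
      g s ∈ AttrN E Q U T r) :
    ∀ m : ℕ, ∀ π : ℕ → S, Guided E Q g π → (∀ k, π k ∈ U) →
      π 0 ∈ AttrN E Q U T m → ∃ j, π j ∈ T := by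
  intro m
  induction m using Nat.strong_induction_on with
  | _ m ih =>
    intro π hπ hin h0
    match m with
    | 0 => exact ⟨0, h0⟩
    | Nat.succ n =>
      by_cases hn : π 0 ∈ AttrN E Q U T n
      · exact ih n (by omega) π hπ hin hn
      · have hnext : π 1 ∈ AttrN E Q U T n := by
          rcases h0 with h0 | h0
          · exact absurd h0 hn
          · by_cases hQ : π 0 ∈ Q
            · rw [(hπ 0).1 hQ]
              exact hg (π 0) hQ n (Or.inr h0) hn
            · rcases h0.2 with ⟨hQ', _⟩ | ⟨_, hall⟩
              · exact absurd hQ' hQ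
              · exact hall (π 1) (hin 1) ((hπ 0).2 hQ)
        obtain ⟨j, hj⟩ := ih n (by omega) (fun k => π (k + 1)) (guided_shift hπ 1)
          (fun k => hin (k + 1)) hnext
        exact ⟨j + 1, hj⟩


/-! ### The inductive claim: positional determinacy on a subarena -/

/-- Positional determinacy on the subarena `U`: there is a partition (covering)
of `U` into `W1 ∪ W2` and memoryless strategies `σ` (for the player owning `P`,
aiming at even parity) and `τ` (for the opponent, aiming at odd parity)
which are winning on their respective regions against all plays inside `U`. -/
def Claim (P : Set S) (p : S → ℕ) (U : Set S) : Prop :=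
  ∃ W1 W2 : Set S, ∃ σ τ : S → S,
    W1 ∪ W2 = U ∧
    (∀ s ∈ U, s ∈ P → E s (σ s) ∧ σ s ∈ U) ∧
    (∀ s ∈ U, s ∉ P → E s (τ s) ∧ τ s ∈ U) ∧
    (∀ s ∈ W1, s ∈ P → σ s ∈ W1) ∧
    (∀ s ∈ W2, s ∉ P → τ s ∈ W2) ∧
    (∀ s ∈ W1, s ∉ P → ∀ t ∈ U, E s t → t ∈ W1) ∧
    (∀ s ∈ W2, s ∈ P → ∀ t ∈ U, E s t → t ∈ W2) ∧
    (∀ π : ℕ → S, Guided E P σ π → (∀ k, π k ∈ U) → π 0 ∈ W1 →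
      Even (sInf (p '' infSet π))) ∧
    (∀ π : ℕ → S, Guided E Pᶜ τ π → (∀ k, π k ∈ U) → π 0 ∈ W2 →
      Odd (sInf (p '' infSet π)))

lemma parity_flip (p : S → ℕ) (π : ℕ → S) :
    sInf ((fun s => p s + 1) '' infSet π) = sInf (p '' infSet π) + 1 := by
  have h1 : (fun s => p s + 1) '' infSet π = (fun n => n + 1) '' (p '' infSet π) := by
    rw [Set.image_image]
  rw [h1, sInf_image_add_one ((infSet_nonempty π).image p)]

lemma guided_compl {P : Set S} {g : S → S} {π : ℕ → S} :
    Guided E Pᶜᶜ g π ↔ Guided E P g π := by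
  rw [compl_compl]

lemma claim_swap {P : Set S} {p : S → ℕ} {U : Set S}
    (h : Claim E Pᶜ (fun s => p s + 1) U) : Claim E P p U := by
  obtain ⟨W1, W2, σ, τ, hun, hσv, hτv, hσ5, hτ5, h61, h62, hw1, hw2⟩ := h
  refine ⟨W2, W1, τ, σ, by rw [Set.union_comm]; exact hun, ?_, ?_, ?_, ?_, ?_, ?_, ?_, ?_⟩
  · intro s hsU hsP
    exact hτv s hsU (by simp [hsP])
  · intro s hsU hsP
    exact hσv s hsU (by simpa using hsP)
  · intro s hs hsP
    exact hτ5 s hs (by simp [hsP])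
  · intro s hs hsP
    exact hσ5 s hs (by simpa using hsP)
  · intro s hs hsP t htU hE
    exact h62 s hs (by simp [hsP]) t htU hE
  · intro s hs hsP t htU hE
    exact h61 s hs (by simpa using hsP) t htU hE
  · intro π hg hin h0
    have := hw2 π ((guided_compl E).mpr hg) hin h0
    rw [parity_flip] at this
    rcases this with ⟨m, hm⟩
    exact ⟨m, by omega⟩
  · intro π hg hin h0
    have := hw1 π hg hin h0
    rw [parity_flip] at this
    rcases this with ⟨m, hm⟩
    exact ⟨m - 1, by omega⟩

lemma claim_empty (hE : ∀ s : S, ∃ t, E s t) (P : Set S) (p : S → ℕ) :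
    Claim E P p ∅ := by
  refine ⟨∅, ∅, fun s => Classical.choose (hE s), fun s => Classical.choose (hE s),
    by simp, by simp, by simp, by simp, by simp, by simp, by simp, ?_, ?_⟩
  · intro π _ _ h0
    exact absurd h0 (Set.notMem_empty _)
  · intro π _ _ h0
    exact absurd h0 (Set.notMem_empty _)


/-! ### The main inductive step -/

lemma claim_of_even (hE : ∀ s : S, ∃ t, E s t) {U : Set S} (P : Set S) (p : S → ℕ)
    (hU : ∀ s ∈ U, ∃ t ∈ U, E s t) (hne : U.Nonempty)
    (hd : Even (sInf (p '' U)))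
    (IH : ∀ V : Set S, V.ncard < U.ncard → (∀ s ∈ V, ∃ t ∈ V, E s t) →
      ∀ (P' : Set S) (p' : S → ℕ), Claim E P' p' V) :
    Claim E P p U := by
  classical
  set d := sInf (p '' U) with hd_def
  have hd_mem : d ∈ p '' U := Nat.sInf_mem (hne.image p)
  have hd_le : ∀ s ∈ U, d ≤ p s := fun s hs => Nat.sInf_le ⟨s, hs, rfl⟩
  set D : Set S := {s | s ∈ U ∧ p s = d} with hD_def
  have hDU : D ⊆ U := fun s hs => hs.1
  have hDne : D.Nonempty := by
    obtain ⟨s, hs, he⟩ := hd_mem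
    exact ⟨s, hs, he⟩
  set A : Set S := Attr E P U D with hA_def
  have hAU : A ⊆ U := attr_subset_arena hDU
  have hDA : D ⊆ A := target_subset_attr
  set U' : Set S := U \ A with hU'_def
  have hU'U : U' ⊆ U := Set.diff_subset
  have hU'nb : ∀ s ∈ U', ∃ t ∈ U', E s t := nonblocking_diff_attr E hU
  have hcard' : U'.ncard < U.ncard := by
    apply Set.ncard_lt_ncard _ (Set.toFinite U)
    rw [Set.ssubset_iff_subset_ne]
    refine ⟨hU'U, ?_⟩
    intro hEq
    obtain ⟨s0, hs0⟩ := hDne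
    have hs0' : s0 ∈ U' := by rw [hEq]; exact hDU hs0
    exact hs0'.2 (hDA hs0)
  obtain ⟨W1', W2', σ', τ', hun', hσv', hτv', hσ5', hτ5', h61', h62', hw1', hw2'⟩ :=
    IH U' hcard' hU'nb P p
  by_cases h2 : W2' = ∅
  · -- player `P` wins everywhere in `U`
    have hW1' : W1' = U' := by rw [h2, Set.union_empty] at hun'; exact hun'
    set σ : S → S := fun s =>
      if s ∈ U' then σ' s
      else if h : s ∈ P ∧ s ∈ A ∧ s ∉ D then
        Classical.choose (attr_exists E h.1 h.2.1 h.2.2)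
      else if h : s ∈ U then Classical.choose (hU s h)
      else Classical.choose (hE s) with hσ_def
    set τ : S → S := fun s =>
      if h : s ∈ U then Classical.choose (hU s h) else Classical.choose (hE s) with hτ_def
    have hσU' : ∀ s ∈ U', σ s = σ' s := by
      intro s hs
      simp only [hσ_def, if_pos hs]
    have hσattr : ∀ s, s ∈ P → s ∈ A → s ∉ D →
        E s (σ s) ∧ σ s ∈ AttrN E P U D (attrRk (E := E) P U D s - 1) := by
      intro s hsP hsA hsD
      have hs' : s ∉ U' := fun h => h.2 hsA
      have hcond : s ∈ P ∧ s ∈ A ∧ s ∉ D := ⟨hsP, hsA, hsD⟩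
      have hσs : σ s = Classical.choose (attr_exists E hcond.1 hcond.2.1 hcond.2.2) := by
        simp only [hσ_def]
        rw [if_neg hs', dif_pos hcond]
      rw [hσs]
      exact Classical.choose_spec (attr_exists E hcond.1 hcond.2.1 hcond.2.2)
    have hσvalid : ∀ s ∈ U, s ∈ P → E s (σ s) ∧ σ s ∈ U := by
      intro s hsU hsP
      by_cases hs' : s ∈ U'
      · rw [hσU' s hs']
        have h := hσv' s hs' hsP
        exact ⟨h.1, hU'U h.2⟩
      · have hsA : s ∈ A := by
          by_contra h
          exact hs' ⟨hsU, h⟩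
        by_cases hsD : s ∈ D
        · have hσs : σ s = Classical.choose (hU s hsU) := by
            simp only [hσ_def]
            rw [if_neg hs', dif_neg, dif_pos hsU]
            rintro ⟨_, _, hD⟩
            exact hD hsD
          rw [hσs]
          obtain ⟨h1, h2'⟩ := Classical.choose_spec (hU s hsU)
          exact ⟨h2', h1⟩
        · obtain ⟨h1, h2'⟩ := hσattr s hsP hsA hsD
          exact ⟨h1, hAU (attrN_subset_attr _ h2')⟩
    have hτvalid : ∀ s ∈ U, s ∉ P → E s (τ s) ∧ τ s ∈ U := by
      intro s hsU _
      have hτs : τ s = Classical.choose (hU s hsU) := by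
        simp only [hτ_def]
        rw [dif_pos hsU]
      rw [hτs]
      obtain ⟨h1, h2'⟩ := Classical.choose_spec (hU s hsU)
      exact ⟨h2', h1⟩
    refine ⟨U, ∅, σ, τ, Set.union_empty U, hσvalid, hτvalid,
      fun s hs hsP => (hσvalid s hs hsP).2,
      fun s hs => absurd hs (Set.notMem_empty s),
      fun s _ _ t htU _ => htU,
      fun s hs => absurd hs (Set.notMem_empty s), ?_,
      fun π _ _ h0 => absurd h0 (Set.notMem_empty _)⟩
    intro π hg hin _
    by_cases hD : ∀ N : ℕ, ∃ k, N ≤ k ∧ π k ∈ D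
    · obtain ⟨s, hsD, hsInf⟩ := exists_infSet_of_frequently D π hD
      have hEq : sInf (p '' infSet π) = d := by
        apply le_antisymm
        · have : p s = d := hsD.2
          rw [← this]
          exact Nat.sInf_le ⟨s, hsInf, rfl⟩
        · obtain ⟨x, hx, hpx⟩ := Nat.sInf_mem ((infSet_nonempty π).image p)
          rw [← hpx]
          exact hd_le x (infSet_subset hin hx)
      rw [hEq]
      exact hd
    · push_neg at hD
      obtain ⟨N, hN⟩ := hD
      have hgσ : ∀ s, s ∈ P → ∀ r : ℕ, s ∈ AttrN E P U D (r + 1) →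
          s ∉ AttrN E P U D r → σ s ∈ AttrN E P U D r := by
        intro s hsP r h1 h0'
        have hsA : s ∈ A := attrN_subset_attr _ h1
        have hsD : s ∉ D := fun h => h0' (attrN_mono (Nat.zero_le r) h)
        obtain ⟨_, h2'⟩ := hσattr s hsP hsA hsD
        have hrk : attrRk (E := E) P U D s - 1 ≤ r := by
          have : attrRk (E := E) P U D s ≤ r + 1 := Nat.sInf_le h1
          omega
        exact attrN_mono hrk h2'
      have hA' : ∀ k, N ≤ k → π k ∉ A := by
        intro k hk hAk
        obtain ⟨m, hm⟩ := Set.mem_iUnion.mp hAk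
        obtain ⟨j, hj⟩ := attr_reach E hgσ m (fun i => π (i + k)) (guided_shift hg k)
          (fun i => hin (i + k)) (by simpa using hm)
        exact hN (j + k) (by omega) hj
      have hU'k : ∀ k, π (k + N) ∈ U' := fun k => ⟨hin _, hA' (k + N) (by omega)⟩
      have hg' : Guided E P σ' (fun k => π (k + N)) := by
        have hsh := guided_shift hg N
        intro k
        refine ⟨?_, (hsh k).2⟩
        intro hk
        rw [(hsh k).1 hk]
        exact (hσU' _ (hU'k k))
      have hfin := hw1' (fun k => π (k + N)) hg' (fun k => hU'k k)
        (by rw [hW1']; exact hU'k 0)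
      rwa [infSet_shift] at hfin
  · -- the opponent's region is extended by an attractor
    have hW2'U' : W2' ⊆ U' := by rw [← hun']; exact Set.subset_union_right
    set B : Set S := Attr E Pᶜ U W2' with hB_def
    have hBU : B ⊆ U := attr_subset_arena (hW2'U'.trans hU'U)
    have hW2'B : W2' ⊆ B := target_subset_attr
    set U'' : Set S := U \ B with hU''_def
    have hU''U : U'' ⊆ U := Set.diff_subset
    have hU''nb : ∀ s ∈ U'', ∃ t ∈ U'', E s t := nonblocking_diff_attr E hU
    have hcard'' : U''.ncard < U.ncard := by
      apply Set.ncard_lt_ncard _ (Set.toFinite U)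
      rw [Set.ssubset_iff_subset_ne]
      refine ⟨hU''U, ?_⟩
      intro hEq
      obtain ⟨s0, hs0⟩ := Set.nonempty_iff_ne_empty.mpr h2
      have hs0' : s0 ∈ U'' := by rw [hEq]; exact hU'U (hW2'U' hs0)
      exact hs0'.2 (hW2'B hs0)
    obtain ⟨W1'', W2'', σ'', τ'', hun'', hσv'', hτv'', hσ5'', hτ5'', h61'', h62'', hw1'', hw2''⟩ :=
      IH U'' hcard'' hU''nb P p
    have hW1''U'' : W1'' ⊆ U'' := by rw [← hun'']; exact Set.subset_union_left
    have hW2''U'' : W2'' ⊆ U'' := by rw [← hun'']; exact Set.subset_union_right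
    set σ : S → S := fun s =>
      if s ∈ U'' then σ'' s
      else if h : s ∈ U then Classical.choose (hU s h)
      else Classical.choose (hE s) with hσ_def
    set τ : S → S := fun s =>
      if s ∈ U'' then τ'' s
      else if s ∈ W2' then τ' s
      else if h : s ∈ Pᶜ ∧ s ∈ B ∧ s ∉ W2' then
        Classical.choose (attr_exists E h.1 h.2.1 h.2.2)
      else if h : s ∈ U then Classical.choose (hU s h)
      else Classical.choose (hE s) with hτ_def
    have hσU'' : ∀ s ∈ U'', σ s = σ'' s := by
      intro s hs
      simp only [hσ_def, if_pos hs]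
    have hτU'' : ∀ s ∈ U'', τ s = τ'' s := by
      intro s hs
      simp only [hτ_def, if_pos hs]
    have hτW2' : ∀ s ∈ W2', τ s = τ' s := by
      intro s hs
      have hs'' : s ∉ U'' := fun h => h.2 (hW2'B hs)
      simp only [hτ_def]
      rw [if_neg hs'', if_pos hs]
    have hτattr : ∀ s, s ∈ Pᶜ → s ∈ B → s ∉ W2' →
        E s (τ s) ∧ τ s ∈ AttrN E Pᶜ U W2' (attrRk (E := E) Pᶜ U W2' s - 1) := by
      intro s hsQ hsB hsW
      have hs'' : s ∉ U'' := fun h => h.2 hsB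
      have hcond : s ∈ Pᶜ ∧ s ∈ B ∧ s ∉ W2' := ⟨hsQ, hsB, hsW⟩
      have hτs : τ s = Classical.choose (attr_exists E hcond.1 hcond.2.1 hcond.2.2) := by
        simp only [hτ_def]
        rw [if_neg hs'', if_neg hsW, dif_pos hcond]
      rw [hτs]
      exact Classical.choose_spec (attr_exists E hcond.1 hcond.2.1 hcond.2.2)
    have hunion : W1'' ∪ (W2'' ∪ B) = U := by
      rw [← Set.union_assoc, hun'']
      exact Set.diff_union_of_subset hBU
    have hσvalid : ∀ s ∈ U, s ∈ P → E s (σ s) ∧ σ s ∈ U := by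
      intro s hsU hsP
      by_cases hs'' : s ∈ U''
      · rw [hσU'' s hs'']
        have h := hσv'' s hs'' hsP
        exact ⟨h.1, hU''U h.2⟩
      · have hσs : σ s = Classical.choose (hU s hsU) := by
          simp only [hσ_def]
          rw [if_neg hs'', dif_pos hsU]
        rw [hσs]
        obtain ⟨h1', h2'⟩ := Classical.choose_spec (hU s hsU)
        exact ⟨h2', h1'⟩
    have hτvalid : ∀ s ∈ U, s ∉ P → E s (τ s) ∧ τ s ∈ U := by
      intro s hsU hsP
      by_cases hs'' : s ∈ U''
      · rw [hτU'' s hs'']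
        have h := hτv'' s hs'' hsP
        exact ⟨h.1, hU''U h.2⟩
      · by_cases hsW : s ∈ W2'
        · rw [hτW2' s hsW]
          have h := hτv' s (hW2'U' hsW) hsP
          exact ⟨h.1, hU'U h.2⟩
        · have hsB : s ∈ B := by
            by_contra h
            exact hs'' ⟨hsU, h⟩
          obtain ⟨h1', h2'⟩ := hτattr s hsP hsB hsW
          exact ⟨h1', hBU (attrN_subset_attr _ h2')⟩
    have hσ5 : ∀ s ∈ W1'', s ∈ P → σ s ∈ W1'' := by
      intro s hs hsP
      rw [hσU'' s (hW1''U'' hs)]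
      exact hσ5'' s hs hsP
    have hτ5 : ∀ s ∈ W2'' ∪ B, s ∉ P → τ s ∈ W2'' ∪ B := by
      intro s hs hsP
      rcases hs with hs | hs
      · rw [hτU'' s (hW2''U'' hs)]
        exact Or.inl (hτ5'' s hs hsP)
      · by_cases hsW : s ∈ W2'
        · rw [hτW2' s hsW]
          exact Or.inr (hW2'B (hτ5' s hsW hsP))
        · obtain ⟨_, h2'⟩ := hτattr s hsP hs hsW
          exact Or.inr (attrN_subset_attr _ h2')
    have h61 : ∀ s ∈ W1'', s ∉ P → ∀ t ∈ U, E s t → t ∈ W1'' := by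
      intro s hs hsP t htU hEd
      have hsU'' : s ∈ U'' := hW1''U'' hs
      have htB : t ∉ B := by
        intro htB
        exact hsU''.2 (attr_closed_mem (hU''U hsU'') hsP hEd htB)
      exact h61'' s hs hsP t ⟨htU, htB⟩ hEd
    have h62 : ∀ s ∈ W2'' ∪ B, s ∈ P → ∀ t ∈ U, E s t → t ∈ W2'' ∪ B := by
      intro s hs hsP t htU hEd
      rcases hs with hs | hs
      · by_cases htB : t ∈ B
        · exact Or.inr htB
        · exact Or.inl (h62'' s hs hsP t ⟨htU, htB⟩ hEd)
      · by_cases hsW : s ∈ W2'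
        · have htA : t ∉ A := by
            intro htA
            exact (hW2'U' hsW).2 (attr_closed_mem (hU'U (hW2'U' hsW)) hsP hEd htA)
          exact Or.inr (hW2'B (h62' s hsW hsP t ⟨htU, htA⟩ hEd))
        · have hsQ : s ∉ Pᶜ := fun h => h hsP
          exact Or.inr (attr_succ_of_notQ E hsQ hs hsW t htU hEd)
    refine ⟨W1'', W2'' ∪ B, σ, τ, hunion, hσvalid, hτvalid, hσ5, hτ5, h61, h62, ?_, ?_⟩
    · -- winning for `P` on `W1''`
      intro π hg hin h0
      have hinv : ∀ k, π k ∈ W1'' := by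
        intro k
        induction k with
        | zero => exact h0
        | succ k ih =>
          by_cases hk : π k ∈ P
          · rw [(hg k).1 hk]
            exact hσ5 _ ih hk
          · exact h61 _ ih hk _ (hin (k + 1)) ((hg k).2 hk)
      apply hw1'' π ?_ (fun k => hW1''U'' (hinv k)) h0
      intro k
      refine ⟨?_, (hg k).2⟩
      intro hk
      rw [(hg k).1 hk]
      exact hσU'' _ (hW1''U'' (hinv k))
    · -- winning for the opponent on `W2'' ∪ B`
      intro π hg hin h0
      have hinv : ∀ k, π k ∈ W2'' ∪ B := by
        intro k
        induction k with
        | zero => exact h0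
        | succ k ih =>
          by_cases hk : π k ∈ P
          · exact h62 _ ih hk _ (hin (k + 1)) ((hg k).2 (fun h => h hk))
          · rw [(hg k).1 hk]
            exact hτ5 _ ih hk
      by_cases hB2 : ∃ k, π k ∈ B
      · obtain ⟨k0, hk0⟩ := hB2
        have hgτ : ∀ s, s ∈ Pᶜ → ∀ r : ℕ, s ∈ AttrN E Pᶜ U W2' (r + 1) →
            s ∉ AttrN E Pᶜ U W2' r → τ s ∈ AttrN E Pᶜ U W2' r := by
          intro s hsQ r h1 h0'
          have hsB : s ∈ B := attrN_subset_attr _ h1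
          have hsW : s ∉ W2' := fun h => h0' (attrN_mono (Nat.zero_le r) h)
          obtain ⟨_, h2'⟩ := hτattr s hsQ hsB hsW
          have hrk : attrRk (E := E) Pᶜ U W2' s - 1 ≤ r := by
            have : attrRk (E := E) Pᶜ U W2' s ≤ r + 1 := Nat.sInf_le h1
            omega
          exact attrN_mono hrk h2'
        obtain ⟨m, hm⟩ := Set.mem_iUnion.mp hk0
        obtain ⟨j, hj⟩ := attr_reach E hgτ m (fun i => π (i + k0)) (guided_shift hg k0)
          (fun i => hin (i + k0)) (by simpa using hm)
        have hsuf : ∀ i, π (i + (j + k0)) ∈ W2' := by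
          intro i
          induction i with
          | zero => rw [Nat.zero_add]; exact hj
          | succ i ih =>
            have hidx : i + 1 + (j + k0) = (i + (j + k0)) + 1 := by omega
            by_cases hk : π (i + (j + k0)) ∈ P
            · have hEdge : E (π (i + (j + k0))) (π (i + (j + k0) + 1)) :=
                (hg (i + (j + k0))).2 (fun h => h hk)
              have htU : π (i + (j + k0) + 1) ∈ U := hin _
              have htA : π (i + (j + k0) + 1) ∉ A := by
                intro hA2
                exact (hW2'U' ih).2
                  (attr_closed_mem (hU'U (hW2'U' ih)) hk hEdge hA2)
              rw [hidx]
              exact h62' _ ih hk _ ⟨htU, htA⟩ hEdge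
            · rw [hidx, (hg (i + (j + k0))).1 hk, hτW2' _ ih]
              exact hτ5' _ ih hk
        have hgτ' : Guided E Pᶜ τ' (fun i => π (i + (j + k0))) := by
          have hsh := guided_shift hg (j + k0)
          intro i
          refine ⟨?_, (hsh i).2⟩
          intro hi
          rw [(hsh i).1 hi]
          exact hτW2' _ (hsuf i)
        have hfin := hw2' (fun i => π (i + (j + k0))) hgτ'
          (fun i => hW2'U' (hsuf i)) (by simpa using hj)
        rwa [infSet_shift] at hfin
      · push_neg at hB2
        have hW2''k : ∀ k, π k ∈ W2'' := fun k => (hinv k).resolve_right (hB2 k)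
        apply hw2'' π ?_ (fun k => hW2''U'' (hW2''k k)) (hW2''k 0)
        intro k
        refine ⟨?_, (hg k).2⟩
        intro hk
        rw [(hg k).1 hk]
        exact hτU'' _ (hW2''U'' (hW2''k k))


/-- Positional determinacy of parity games on any non-blocking subarena. -/
lemma claim_all (hE : ∀ s : S, ∃ t, E s t) :
    ∀ n : ℕ, ∀ U : Set S, U.ncard ≤ n → (∀ s ∈ U, ∃ t ∈ U, E s t) →
      ∀ (P : Set S) (p : S → ℕ), Claim E P p U := by
  intro n
  induction n using Nat.strong_induction_on with
  | _ n ih =>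
    intro U hcard hU P p
    rcases U.eq_empty_or_nonempty with hUe | hne
    · rw [hUe]
      exact claim_empty E hE P p
    · have IH : ∀ V : Set S, V.ncard < U.ncard → (∀ s ∈ V, ∃ t ∈ V, E s t) →
          ∀ (P' : Set S) (p' : S → ℕ), Claim E P' p' V := by
        intro V hV hVnb P' p'
        exact ih V.ncard (by omega) V (le_refl _) hVnb P' p'
      rcases Nat.even_or_odd (sInf (p '' U)) with hev | hod
      · exact claim_of_even E hE P p hU hne hev IH
      · apply claim_swap
        apply claim_of_even E hE Pᶜ (fun s => p s + 1) hU hne ?_ IH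
        have h1 : (fun s => p s + 1) '' U = (fun m => m + 1) '' (p '' U) := by
          rw [Set.image_image]
        rw [h1, sInf_image_add_one (hne.image p)]
        rcases hod with ⟨m, hm⟩
        exact ⟨m + 1, by omega⟩

end ZielonkaProof

section ZielonkaFinal

open ZielonkaProof

theorem parity_memoryless {S : Type} [Fintype S] (G : DetGame S) (p : S → ℕ) :
    (∃ α : DetGame.Strat1 G, α.Memoryless ∧
      ∀ s ∈ G.Win1 (ParityObj p), ∀ β : DetGame.Strat2 G,
        G.outcome s α β ∈ ParityObj p) ∧
    (∃ β : DetGame.Strat2 G, β.Memoryless ∧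
      ∀ s ∈ G.Win2 (CoparityObj p), ∀ α : DetGame.Strat1 G,
        G.outcome s α β ∈ CoparityObj p) := by
  classical
  obtain ⟨W1, W2, σ, τ, hun, hσv, hτv, _, _, _, _, hw1, hw2⟩ :=
    ZielonkaProof.claim_all (E := G.E) G.exists_succ (Fintype.card S) Set.univ
      (le_of_eq (by rw [Set.ncard_univ, Nat.card_eq_fintype_card]))
      (fun s _ => by
        obtain ⟨t, ht⟩ := G.exists_succ s
        exact ⟨t, trivial, ht⟩)
      G.S1 p
  -- the two memoryless strategies
  set α : DetGame.Strat1 G :=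
    ⟨fun _ s => σ s, fun h s hs => (hσv s trivial hs).1⟩ with hα_def
  set β : DetGame.Strat2 G :=
    ⟨fun _ s => τ s, fun h s hs => (hτv s trivial hs).1⟩ with hβ_def
  -- unfolding of the outcome function
  have hstep : ∀ (α' : DetGame.Strat1 G) (β' : DetGame.Strat2 G) (s : S) (k : ℕ),
      G.outcome s α' β' (k + 1) =
        if G.outcome s α' β' k ∈ G.S1
          then α'.f (G.histPair α' β' s k).1 (G.outcome s α' β' k)
          else β'.f (G.histPair α' β' s k).1 (G.outcome s α' β' k) :=
    fun α' β' s k => rfl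
  -- outcomes against our player-1 strategy are `σ`-guided
  have hg1 : ∀ (s : S) (β' : DetGame.Strat2 G),
      Guided G.E G.S1 σ (G.outcome s α β') := by
    intro s β' k
    constructor
    · intro hk
      rw [hstep, if_pos hk]
    · intro hk
      rw [hstep, if_neg hk]
      exact β'.valid _ _ hk
  -- outcomes against our player-2 strategy are `τ`-guided
  have hg2 : ∀ (s : S) (α' : DetGame.Strat1 G),
      Guided G.E G.S1ᶜ τ (G.outcome s α' β) := by
    intro s α' k
    constructor
    · intro hk
      rw [hstep, if_neg hk]
    · intro hk
      rw [Set.notMem_compl_iff] at hk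
      rw [hstep, if_pos hk]
      exact α'.valid _ _ hk
  have hzero : ∀ (s : S) (α' : DetGame.Strat1 G) (β' : DetGame.Strat2 G),
      G.outcome s α' β' 0 = s := fun _ _ _ => rfl
  constructor
  · refine ⟨α, fun _ _ _ => rfl, ?_⟩
    intro s hs β'
    have hsW1 : s ∈ W1 := by
      by_contra hsW1
      have hsW2 : s ∈ W2 := by
        have huniv : s ∈ W1 ∪ W2 := by rw [hun]; trivial
        exact huniv.resolve_left hsW1
      obtain ⟨α₀, hα₀⟩ := hs
      have hodd := hw2 (G.outcome s α₀ β) (hg2 s α₀) (fun _ => trivial)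
        (by rw [hzero]; exact hsW2)
      have heven : Even (sInf (p '' infSet (G.outcome s α₀ β))) := hα₀ β
      exact (Nat.not_odd_iff_even.mpr heven) hodd
    exact hw1 (G.outcome s α β') (hg1 s β') (fun _ => trivial)
      (by rw [hzero]; exact hsW1)
  · refine ⟨β, fun _ _ _ => rfl, ?_⟩
    intro s hs α'
    have hsW2 : s ∈ W2 := by
      by_contra hsW2
      have hsW1 : s ∈ W1 := by
        have huniv : s ∈ W1 ∪ W2 := by rw [hun]; trivial
        exact huniv.resolve_right hsW2
      obtain ⟨β₀, hβ₀⟩ := hs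
      have hg : Guided G.E G.S1 σ (G.outcome s α β₀) := hg1 s β₀
      have heven := hw1 (G.outcome s α β₀) hg (fun _ => trivial)
        (by rw [hzero]; exact hsW1)
      have hodd : Odd (sInf (p '' infSet (G.outcome s α β₀))) := hβ₀ α
      exact (Nat.not_odd_iff_even.mpr heven) hodd
    exact hw2 (G.outcome s α' β) (hg2 s α') (fun _ => trivial)
      (by rw [hzero]; exact hsW2)

end ZielonkaFinal
end
end

section
/- Let (G, sI, λ) be a synthesis game for a specification φ ⊆ Σ^ω with parity objective Φ = Parity(p). Then φ is Moore realizable if and only if sI ∈ Win1(Φ). (In particular, every Moore transducer T with L(T) ⊆ φ induces a sure winning strategy of player 1 from sI for Φ, and every memoryless sure winning strategy of player 1 from sI for Φ induces a Moore transducer T with L(T) ⊆ φ.) -/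
open scoped Classical
noncomputable section

/-! ### Transducers and synthesis games -/

/-- A Moore transducer with input alphabet `Set I` and output alphabet `Set O`. -/
structure Moore (I O : Type) where
  Q : Type
  fin : Finite Q
  qI : Q
  tr : Q → Set I → Q
  out : Q → Set O

namespace Moore

variable {I O : Type} (T : Moore I O)

/-- The run of the transducer over an infinite input word. -/
def run (w : ℕ → Set I) : ℕ → T.Q
  | 0 => T.qI
  | i + 1 => T.tr (run w i) (w i)

/-- The infinite word over `Set I × Set O` generated by the run on `w`. -/
def output (w : ℕ → Set I) : ℕ → Set I × Set O :=
  fun i => (w i, T.out (T.run w i))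

/-- The language of the transducer. -/
def lang : Set (ℕ → Set I × Set O) := {x | ∃ w : ℕ → Set I, x = T.output w}

end Moore

/-- A specification is (Moore) realizable if some Moore transducer
implements it. -/
def MooreRealizable {I O : Type} (L : Set (ℕ → Set I × Set O)) : Prop :=
  ∃ T : Moore I O, T.lang ⊆ L

/-- `ψ` is a sufficient environment assumption for `φ` if `ψᶜ ∪ φ` is
(Moore) realizable. -/
def SufficientAssumption {I O : Type} (φ ψ : Set (ℕ → Set I × Set O)) : Prop :=
  MooreRealizable (ψᶜ ∪ φ)

/-- A Mealy transducer with input alphabet `Set O` and output alphabet `Set I`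
(an environment). -/
structure Mealy (I O : Type) where
  Q : Type
  fin : Finite Q
  qI : Q
  tr : Q → Set O → Q
  out : Q → Set O → Set I

namespace Mealy

variable {I O : Type} (T : Mealy I O)

def run (w : ℕ → Set O) : ℕ → T.Q
  | 0 => T.qI
  | i + 1 => T.tr (run w i) (w i)

def output (w : ℕ → Set O) : ℕ → Set I × Set O :=
  fun i => (T.out (T.run w i) (w i), w i)

def lang : Set (ℕ → Set I × Set O) := {x | ∃ w : ℕ → Set O, x = T.output w}

end Mealy

/-- `ψ` is realizable for the environment if some Mealy transducer with
input alphabet `Set O` and output alphabet `Set I` implements it. -/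
def EnvRealizable {I O : Type} (ψ : Set (ℕ → Set I × Set O)) : Prop :=
  ∃ T : Mealy I O, T.lang ⊆ ψ

/-- A synthesis game: a bipartite deterministic game graph with an initial
player-1 state, whose player-1 states are labeled by input letters and whose
player-2 states are labeled by output letters, deterministic and complete
with respect to the labels. -/
structure SynthGame (S : Type) [Fintype S] (I O : Type) extends DetGame S where
  sI : S
  sI_mem : sI ∈ S1
  bipartite : ∀ s t : S, E s t → (s ∈ S1 ∧ t ∉ S1) ∨ (s ∉ S1 ∧ t ∈ S1)
  labI : S → Set I
  labO : S → Set O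
  labelDet1 : ∀ s t t' : S, s ∈ S1 → E s t → E s t' → labO t = labO t' → t = t'
  labelDet2 : ∀ s t t' : S, s ∉ S1 → E s t → E s t' → labI t = labI t' → t = t'
  complete1 : ∀ s ∈ S1, ∀ o : Set O, ∃ t : S, E s t ∧ labO t = o
  complete2 : ∀ s ∉ S1, ∀ i : Set I, ∃ t : S, E s t ∧ labI t = i

namespace SynthGame

variable {S I O : Type} [Fintype S] (SG : SynthGame S I O)

/-- The infinite word over `Set I × Set O` corresponding to a play from `sI`. -/
def word (π : ℕ → S) : ℕ → Set I × Set O :=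
  fun i => (SG.labI (π (2 * i + 2)), SG.labO (π (2 * i + 1)))

/-- `SG` with priority function `p` is a synthesis game for the specification
`φ`: a play from `sI` satisfies the parity objective iff its word is in `φ`. -/
def IsGameFor (p : S → ℕ) (φ : Set (ℕ → Set I × Set O)) : Prop :=
  ∀ π : ℕ → S, SG.toDetGame.IsPlay π → π 0 = SG.sI →
    (π ∈ ParityObj p ↔ SG.word π ∈ φ)

/-- The environment assumption defined by a safety assumption `Es`:
words of plays from `sI` never using an edge of `Es`. -/
def psiSafety (Es : Set (S × S)) : Set (ℕ → Set I × Set O) :=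
  {w | ∃ π : ℕ → S, SG.toDetGame.IsPlay π ∧ π 0 = SG.sI ∧ SG.word π = w ∧
    ∀ i : ℕ, (π i, π (i + 1)) ∉ Es}

/-- The environment assumption defined by a strongly fair assumption `El`:
words of plays from `sI` in which, for every edge of `El`, either the source
occurs only finitely often or the edge is taken infinitely often. -/
def psiFair (El : Set (S × S)) : Set (ℕ → Set I × Set O) :=
  {w | ∃ π : ℕ → S, SG.toDetGame.IsPlay π ∧ π 0 = SG.sI ∧ SG.word π = w ∧
    ∀ e ∈ El, e.1 ∉ infSet π ∨
      ∀ N : ℕ, ∃ k : ℕ, N ≤ k ∧ π k = e.1 ∧ π (k + 1) = e.2}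

end SynthGame

/-!
A Moore transducer `T` with `L(T) ⊆ φ` is played by player 1 directly: she feeds the input
letters seen so far into `T` and moves to the successor labelled with its output, so every
outcome spells a word of `L(T)`. Conversely, finite parity games are positionally determined
(Zielonka), so player 1 has a memoryless winning strategy `σ`; the transducer whose states are
the player-1 states, which outputs the label of `σ q` and reads an input by moving to the
successor of `σ q` carrying it, generates exactly the words of the plays consistent with `σ`.

Zielonka's induction on the number of states: if the minimal priority `d` is even, remove the
attractor `A` of player 1 to priority `d`. If she wins the subgame off `A` everywhere, she wins
everywhere; otherwise the opponent's winning region there, together with its attractor, is won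
by the opponent and the remaining subgame is smaller. An odd `d` is the same with the roles
swapped.
-/

open Filter

section Parity

variable {S : Type}

theorem mem_infSet_iff {π : ℕ → S} {t : S} : t ∈ infSet π ↔ ∃ᶠ k in atTop, π k = t :=
  frequently_atTop.symm

theorem infSet_comp_add (π : ℕ → S) (N : ℕ) : infSet (fun k => π (k + N)) = infSet π := by
  ext t
  rw [mem_infSet_iff, mem_infSet_iff, ← frequently_map (P := fun k => π k = t),
    map_add_atTop_eq_nat]

theorem image_infSet_of_injective {T : Type} {f : S → T} (hf : f.Injective) (π : ℕ → S) :
    f '' infSet π = infSet (f ∘ π) := by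
  ext t
  simp only [Set.mem_image, mem_infSet_iff, Function.comp_apply]
  constructor
  · rintro ⟨s, hs, rfl⟩
    exact hs.mono fun k hk => congrArg f hk
  · intro ht
    obtain ⟨k, rfl⟩ := ht.exists
    exact ⟨π k, ht.mono fun _ h => hf h, rfl⟩

theorem exists_mem_infSet_of_frequently [Finite S] {π : ℕ → S} {T : Set S}
    (h : ∃ᶠ k in atTop, π k ∈ T) : ∃ t ∈ T, t ∈ infSet π := by
  have : ∃ᶠ k in atTop, ∃ t : T, π k = t := h.mono fun k hk => ⟨⟨π k, hk⟩, rfl⟩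
  obtain ⟨t, ht⟩ := frequently_exists.1 this
  exact ⟨t, t.2, mem_infSet_iff.2 ht⟩

theorem infSet_nonempty [Finite S] (π : ℕ → S) : (infSet π).Nonempty := by
  obtain ⟨t, -, ht⟩ := exists_mem_infSet_of_frequently (π := π) (T := Set.univ)
    (Frequently.of_forall fun _ => trivial)
  exact ⟨t, ht⟩

theorem Nat.sInf_image_add_one {A : Set ℕ} (hA : A.Nonempty) :
    sInf ((· + 1) '' A) = sInf A + 1 :=
  le_antisymm (Nat.sInf_le ⟨_, Nat.sInf_mem hA, rfl⟩)
    (le_csInf (hA.image _) (by rintro _ ⟨a, ha, rfl⟩; exact Nat.succ_le_succ (Nat.sInf_le ha)))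

theorem mem_parityObj_shift_iff (π : ℕ → S) (N : ℕ) (p : S → ℕ) :
    (fun k => π (k + N)) ∈ ParityObj p ↔ π ∈ ParityObj p := by
  simp only [ParityObj, Set.mem_ofPred_eq, infSet_comp_add]

theorem mem_parityObj_comp_iff {T : Type} {f : S → T} (hf : f.Injective) (π : ℕ → S)
    (p : T → ℕ) : π ∈ ParityObj (p ∘ f) ↔ f ∘ π ∈ ParityObj p := by
  simp only [ParityObj, Set.mem_ofPred_eq, Set.image_comp, image_infSet_of_injective hf]

theorem mem_parityObj_add_one_iff [Finite S] (π : ℕ → S) (p : S → ℕ) :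
    π ∈ ParityObj (fun s => p s + 1) ↔ π ∉ ParityObj p := by
  have hne : (p '' infSet π).Nonempty := (infSet_nonempty π).image p
  simp only [ParityObj, Set.mem_ofPred_eq, ← Set.image_image (· + 1) p,
    Nat.sInf_image_add_one hne, Nat.even_add_one]

theorem mem_parityObj_add_two_iff [Finite S] (π : ℕ → S) (p : S → ℕ) :
    π ∈ ParityObj (fun s => p s + 1 + 1) ↔ π ∈ ParityObj p := by
  rw [mem_parityObj_add_one_iff π (fun s => p s + 1), mem_parityObj_add_one_iff, not_not]

theorem mem_parityObj_of_mem_infSet {p : S → ℕ} {d : ℕ} (hd : Even d) (hmin : ∀ s, d ≤ p s)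
    {π : ℕ → S} {t : S} (ht : t ∈ infSet π) (hpt : p t = d) : π ∈ ParityObj p := by
  have : sInf (p '' infSet π) = d :=
    le_antisymm (Nat.sInf_le ⟨t, ht, hpt⟩)
      (le_csInf ⟨_, t, ht, rfl⟩ (by rintro _ ⟨u, -, rfl⟩; exact hmin u))
  rw [ParityObj, Set.mem_ofPred_eq, this]
  exact hd

end Parity

section MemorylessGames

variable {S : Type} {E : S → S → Prop} {P : Set S} {σ : S → S} {p : S → ℕ} {π : ℕ → S}

/-- The owner of `P` moves according to `σ` along the `E`-path `π`. -/
def IsConsistent (E : S → S → Prop) (P : Set S) (σ : S → S) (π : ℕ → S) : Prop :=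
  (∀ k, E (π k) (π (k + 1))) ∧ ∀ k, π k ∈ P → π (k + 1) = σ (π k)

def WinsFrom (E : S → S → Prop) (P : Set S) (σ : S → S) (p : S → ℕ) (s : S) : Prop :=
  ∀ π, π 0 = s → IsConsistent E P σ π → π ∈ ParityObj p

theorem IsConsistent.shift (hπ : IsConsistent E P σ π) (N : ℕ) :
    IsConsistent E P σ (fun k => π (k + N)) :=
  ⟨fun k => by simpa only [Nat.add_right_comm] using hπ.1 (k + N),
    fun k hk => by simpa only [Nat.add_right_comm] using hπ.2 (k + N) hk⟩

theorem IsConsistent.mem_parityObj (hπ : IsConsistent E P σ π) {N : ℕ}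
    (hw : WinsFrom E P σ p (π N)) : π ∈ ParityObj p :=
  (mem_parityObj_shift_iff π N p).1 (hw _ (by simp) (hπ.shift N))

theorem WinsFrom.of_edge {s t : S} (hw : WinsFrom E P σ p s) (hst : E s t)
    (hσ : s ∈ P → t = σ s) : WinsFrom E P σ p t := by
  intro π hπ0 hπ
  subst hπ0
  let π' : ℕ → S := fun k => Nat.casesOn k s π
  have hπ' : IsConsistent E P σ π' := by
    refine ⟨fun k => ?_, fun k hk => ?_⟩
    · cases k with
      | zero => exact hst
      | succ k => exact hπ.1 k
    · cases k with
      | zero => exact hσ hk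
      | succ k => exact hπ.2 k hk
  exact (mem_parityObj_shift_iff π' 1 p).2 (hw π' rfl hπ')

theorem IsConsistent.mem_parityObj_of_subtype {U : Set S} {σ' : U → U} {ρ : ℕ → U}
    (hρ : IsConsistent E P σ (fun k => ρ k)) (hσ : ∀ k, ↑(ρ k) ∈ P → σ (ρ k) = σ' (ρ k))
    (hw : WinsFrom (fun a b : U => E a b) (Subtype.val ⁻¹' P) σ' (fun a => p a) (ρ 0)) :
    (fun k => (ρ k : S)) ∈ ParityObj p := by
  refine (mem_parityObj_comp_iff Subtype.val_injective ρ p).1 (hw ρ rfl ⟨hρ.1, fun k hk => ?_⟩)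
  exact Subtype.ext ((hρ.2 k hk).trans (hσ k hk))

theorem winsFrom_of_subtype {U : Set S} {σ' : U → U}
    (hU : ∀ s ∈ U, s ∉ P → ∀ t, E s t → t ∈ U)
    (hσ : ∀ a : U, WinsFrom (fun a b : U => E a b) (Subtype.val ⁻¹' P) σ' (fun a => p a) a →
      ↑a ∈ P → σ a = σ' a)
    {a : U} (ha : WinsFrom (fun a b : U => E a b) (Subtype.val ⁻¹' P) σ' (fun a => p a) a) :
    WinsFrom E P σ p a := by
  intro π hπ0 hπ
  have hstay : ∀ k, ∃ b : U, ↑b = π k ∧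
      WinsFrom (fun a b : U => E a b) (Subtype.val ⁻¹' P) σ' (fun a => p a) b := by
    intro k
    induction k with
    | zero => exact ⟨a, hπ0.symm, ha⟩
    | succ k ih =>
      obtain ⟨b, hbk, hb⟩ := ih
      have hedge : E b (π (k + 1)) := hbk ▸ hπ.1 k
      by_cases hP : ↑b ∈ P
      · have hnext : π (k + 1) = σ' b := by rw [← hσ b hb hP, hπ.2 k (hbk ▸ hP), hbk]
        exact ⟨σ' b, hnext.symm, hb.of_edge (hnext ▸ hedge) fun _ => rfl⟩
      · exact ⟨⟨π (k + 1), hU _ b.2 hP _ hedge⟩, rfl, hb.of_edge hedge fun h => absurd h hP⟩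
  choose ρ hρ hρw using hstay
  obtain rfl : (fun k => (ρ k : S)) = π := funext hρ
  exact hπ.mem_parityObj_of_subtype (fun k hP => hσ _ (hρw k) hP) (hρw 0)

end MemorylessGames

section Attractor

variable {S : Type} (E : S → S → Prop) (P X : Set S)

def attrLevel : ℕ → Set S
  | 0 => X
  | n + 1 => attrLevel n ∪
      {s | (s ∈ P ∧ ∃ t, E s t ∧ t ∈ attrLevel n) ∨ (s ∉ P ∧ ∀ t, E s t → t ∈ attrLevel n)}

def attractor : Set S := ⋃ n, attrLevel E P X n

def IsAttractorStrategy (σ : S → S) : Prop :=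
  ∀ n, ∀ s ∈ P, s ∈ attrLevel E P X (n + 1) → s ∉ attrLevel E P X n → σ s ∈ attrLevel E P X n

variable {E P X}

theorem attrLevel_mono : Monotone (attrLevel E P X) :=
  monotone_nat_of_le_succ fun _ => Set.subset_union_left

theorem subset_attractor : X ⊆ attractor E P X :=
  fun _ hs => Set.mem_iUnion.2 ⟨0, hs⟩

theorem notMem_attractor_of_edge {s t : S} (hs : s ∉ attractor E P X) (hP : s ∈ P)
    (hst : E s t) : t ∉ attractor E P X := by
  rintro ⟨_, ⟨n, rfl⟩, hn⟩
  exact hs (Set.mem_iUnion.2 ⟨n + 1, Or.inr (Or.inl ⟨hP, t, hst, hn⟩)⟩)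

theorem exists_edge_notMem_attractor [Finite S] (hE : ∀ s, ∃ t, E s t) {s : S}
    (hs : s ∉ attractor E P X) : ∃ t, E s t ∧ t ∉ attractor E P X := by
  by_cases hP : s ∈ P
  · obtain ⟨t, hst⟩ := hE s
    exact ⟨t, hst, notMem_attractor_of_edge hs hP hst⟩
  by_contra! hall
  have hlevel : ∀ t, ∀ᶠ n in atTop, E s t → t ∈ attrLevel E P X n := by
    intro t
    by_cases hst : E s t
    · obtain ⟨n, hn⟩ := Set.mem_iUnion.1 (hall t hst)
      exact eventually_atTop.2 ⟨n, fun m hm _ => attrLevel_mono hm hn⟩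
    · exact Eventually.of_forall fun _ h => absurd h hst
  obtain ⟨n, hn⟩ := (eventually_all.2 hlevel).exists
  exact hs (Set.mem_iUnion.2 ⟨n + 1, Or.inr (Or.inr ⟨hP, hn⟩)⟩)

theorem exists_isAttractorStrategy (hE : ∀ s, ∃ t, E s t) :
    ∃ σ : S → S, (∀ s, E s (σ s)) ∧ IsAttractorStrategy E P X σ := by
  have hmove : ∀ s, ∃ t, E s t ∧ ∀ n, s ∈ P → s ∈ attrLevel E P X (n + 1) →
      s ∉ attrLevel E P X n → t ∈ attrLevel E P X n := by
    intro s
    by_cases h : ∃ n, s ∈ P ∧ s ∈ attrLevel E P X (n + 1) ∧ s ∉ attrLevel E P X n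
    · obtain ⟨n, hP, hn1, hn⟩ := h
      obtain ⟨t, hst, ht⟩ : ∃ t, E s t ∧ t ∈ attrLevel E P X n := by
        rcases hn1 with h | ⟨-, h⟩ | ⟨h, -⟩
        exacts [absurd h hn, h, absurd hP h]
      refine ⟨t, hst, fun m _ hm1 hm => ?_⟩
      -- the level at which `s` enters the attractor is unique
      obtain rfl : m = n := by
        by_contra hne
        rcases Nat.lt_or_gt_of_ne hne with hlt | hlt
        · exact hn (attrLevel_mono hlt hm1)
        · exact hm (attrLevel_mono hlt hn1)
      exact ht
    · obtain ⟨t, hst⟩ := hE s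
      exact ⟨t, hst, fun n hP hn1 hn => absurd ⟨n, hP, hn1, hn⟩ h⟩
  choose σ hσE hσ using hmove
  exact ⟨σ, hσE, fun n s hP => hσ s n hP⟩

theorem IsAttractorStrategy.congr {σ τ : S → S} (hσ : IsAttractorStrategy E P X σ)
    (h : ∀ s ∈ attractor E P X, s ∉ X → τ s = σ s) : IsAttractorStrategy E P X τ := by
  intro n s hP hn1 hn
  rw [h s (Set.mem_iUnion.2 ⟨n + 1, hn1⟩) fun hX => hn (attrLevel_mono (Nat.zero_le n) hX)]
  exact hσ n s hP hn1 hn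

theorem IsConsistent.exists_mem_of_mem_attrLevel {σ : S → S} (hσ : IsAttractorStrategy E P X σ)
    {n : ℕ} {π : ℕ → S} (hπ : IsConsistent E P σ π) (h0 : π 0 ∈ attrLevel E P X n) :
    ∃ k, π k ∈ X := by
  induction n generalizing π with
  | zero => exact ⟨0, h0⟩
  | succ n ih =>
    by_cases hn : π 0 ∈ attrLevel E P X n
    · exact ih hπ hn
    have h1 : π 1 ∈ attrLevel E P X n := by
      by_cases hP : π 0 ∈ P
      · exact hπ.2 0 hP ▸ hσ n _ hP h0 hn
      · rcases h0 with h | ⟨h, -⟩ | ⟨-, h⟩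
        exacts [absurd h hn, absurd h hP, h _ (hπ.1 0)]
    obtain ⟨k, hk⟩ := ih (hπ.shift 1) h1
    exact ⟨k + 1, hk⟩

theorem IsConsistent.frequently_mem_of_frequently_mem_attractor {σ : S → S}
    (hσ : IsAttractorStrategy E P X σ) {π : ℕ → S} (hπ : IsConsistent E P σ π)
    (h : ∃ᶠ k in atTop, π k ∈ attractor E P X) : ∃ᶠ k in atTop, π k ∈ X := by
  refine frequently_atTop.2 fun N => ?_
  obtain ⟨k, hkN, hk⟩ := frequently_atTop.1 h N
  obtain ⟨n, hn⟩ := Set.mem_iUnion.1 hk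
  obtain ⟨j, hj⟩ := (hπ.shift k).exists_mem_of_mem_attrLevel hσ (by simpa using hn)
  exact ⟨j + k, by omega, hj⟩

end Attractor

section Extend

variable {S : Type} {U : Set S} (g : U → S) (e : S → S)

theorem extend_val_of_notMem {s : S} (h : s ∉ U) : Function.extend Subtype.val g e s = e s :=
  Function.extend_apply' g e s fun ⟨a, ha⟩ => h (ha ▸ a.2)

theorem edge_extend_val {E : S → S → Prop} (hg : ∀ a : U, E a (g a)) (he : ∀ s, E s (e s))
    (s : S) : E s (Function.extend Subtype.val g e s) := by
  by_cases h : s ∈ U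
  · rw [Subtype.val_injective.extend_apply g e ⟨s, h⟩]
    exact hg ⟨s, h⟩
  · rw [extend_val_of_notMem g e h]
    exact he s

end Extend

section Zielonka

variable {S : Type} {E : S → S → Prop} {P X : Set S} {p : S → ℕ}

/-- The opponent owns `Pᶜ`; her objective, the complement of `ParityObj p`, is
`ParityObj (p + 1)`. -/
def PositionallyDetermined (E : S → S → Prop) (P : Set S) (p : S → ℕ) : Prop :=
  ∃ σ τ : S → S, (∀ s, E s (σ s)) ∧ (∀ s, E s (τ s)) ∧
    ∀ s, WinsFrom E P σ p s ∨ WinsFrom E Pᶜ τ (fun s => p s + 1) s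

theorem PositionallyDetermined.of_compl [Finite S]
    (h : PositionallyDetermined E Pᶜ (fun s => p s + 1)) : PositionallyDetermined E P p := by
  obtain ⟨σ, τ, hσ, hτ, hw⟩ := h
  refine ⟨τ, σ, hτ, hσ, fun s => (hw s).symm.imp (fun hτw π h0 hπ => ?_) id⟩
  rw [compl_compl] at hτw
  exact (mem_parityObj_add_two_iff π p).1 (hτw π h0 hπ)

theorem exists_edge_compl_attractor [Finite S] (hE : ∀ s, ∃ t, E s t)
    (a : ↥(attractor E P X)ᶜ) : ∃ b : ↥(attractor E P X)ᶜ, E a b :=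
  let ⟨t, hst, ht⟩ := exists_edge_notMem_attractor hE a.2
  ⟨⟨t, ht⟩, hst⟩

/-- A play either eventually stays in the subgame or visits `X` infinitely often. -/
theorem winsFrom_extend_of_forall_winsFrom [Finite S] {d : ℕ} (hd : Even d)
    (hmin : ∀ s, d ≤ p s) (hX : ∀ x ∈ X, p x = d)
    {σ' : ↥(attractor E P X)ᶜ → ↥(attractor E P X)ᶜ} {σA : S → S}
    (hσ' : ∀ a, WinsFrom (fun a b : ↥(attractor E P X)ᶜ => E a b) (Subtype.val ⁻¹' P) σ'
      (fun a => p a) a)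
    (hσA : IsAttractorStrategy E P X σA) (s : S) :
    WinsFrom E P (Function.extend Subtype.val (fun a => (σ' a : S)) σA) p s := by
  intro π _ hπ
  by_cases hev : ∀ᶠ k in atTop, π k ∈ (attractor E P X)ᶜ
  · obtain ⟨N, hN⟩ := eventually_atTop.1 hev
    let ρ : ℕ → ↥(attractor E P X)ᶜ := fun k => ⟨π (k + N), hN _ (Nat.le_add_left N k)⟩
    refine (mem_parityObj_shift_iff π N p).1 ?_
    exact (hπ.shift N).mem_parityObj_of_subtype (ρ := ρ)
      (fun k _ => Subtype.val_injective.extend_apply _ _ (ρ k)) (hσ' (ρ 0))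
  · have hA : ∃ᶠ k in atTop, π k ∈ attractor E P X := by
      simpa only [Set.mem_compl_iff, not_not] using not_eventually.1 hev
    have hσ : IsAttractorStrategy E P X (Function.extend Subtype.val (fun a => (σ' a : S)) σA) :=
      hσA.congr fun s hs _ => extend_val_of_notMem _ _ (not_not.2 hs)
    obtain ⟨t, htX, ht⟩ :=
      exists_mem_infSet_of_frequently (hπ.frequently_mem_of_frequently_mem_attractor hσ hA)
    exact mem_parityObj_of_mem_infSet hd hmin ht (hX t htX)

/-- The opponent wins from her attractor `B` to her winning region `D` in `U`; the rest of the
game is the smaller subgame off `B`, which she cannot leave. -/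
theorem positionallyDetermined_of_winsFrom_trap [Finite S] (hE : ∀ s, ∃ t, E s t)
    (hIH : ∀ V : Set S, ∀ v ∉ V, (∀ a : V, ∃ b : V, E a b) →
      PositionallyDetermined (fun a b : V => E a b) (Subtype.val ⁻¹' P) (fun a => p a))
    {U : Set S} (hU : ∀ s ∈ U, s ∈ P → ∀ t, E s t → t ∈ U) {τ' : U → U}
    (hτ' : ∀ a : U, E a (τ' a)) {a₀ : U}
    (ha₀ : WinsFrom (fun a b : U => E a b) (Subtype.val ⁻¹' Pᶜ) τ' (fun a => p a + 1) a₀) :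
    PositionallyDetermined E P p := by
  set D : Set S := {s | ∃ h : s ∈ U,
    WinsFrom (fun a b : U => E a b) (Subtype.val ⁻¹' Pᶜ) τ' (fun a => p a + 1) ⟨s, h⟩}
  have hDU : D ⊆ U := fun s hs => hs.1
  set V := (attractor E Pᶜ D)ᶜ
  have hDV : ∀ s ∈ D, s ∉ V := fun s hs hV => hV (subset_attractor hs)
  obtain ⟨σ'', τ'', hσ'', hτ'', hw''⟩ :=
    hIH V a₀ (hDV _ (show (a₀ : S) ∈ D from ⟨a₀.2, ha₀⟩)) (exists_edge_compl_attractor hE)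
  choose next hnext using hE
  obtain ⟨τB, hτBE, hτB⟩ := exists_isAttractorStrategy (P := Pᶜ) (X := D) fun s => ⟨next s, hnext s⟩
  set τD : S → S := Function.extend (Subtype.val : D → S) (fun d => (τ' ⟨d, hDU d.2⟩ : S)) τB
    with hτD
  set τ : S → S := Function.extend Subtype.val (fun a : V => (τ'' a : S)) τD with hτ
  refine ⟨Function.extend Subtype.val (fun a : V => (σ'' a : S)) next, τ,
    edge_extend_val _ _ hσ'' hnext, edge_extend_val _ _ hτ'' (edge_extend_val _ _ ?_ hτBE),
    fun s => ?_⟩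
  · exact fun d => hτ' ⟨d, hDU d.2⟩
  by_cases hs : ∃ h : s ∈ V,
      WinsFrom (fun a b : V => E a b) (Subtype.val ⁻¹' P) σ'' (fun a => p a) ⟨s, h⟩
  · obtain ⟨hsV, hsw⟩ := hs
    exact Or.inl (winsFrom_of_subtype (fun s hs hP t hst => notMem_attractor_of_edge hs hP hst)
      (fun a _ _ => Subtype.val_injective.extend_apply _ _ a) hsw)
  right
  intro π hπ0 hπ
  by_cases hB : ∃ k, π k ∉ V
  · obtain ⟨k, hk⟩ := hB
    obtain ⟨n, hn⟩ := Set.mem_iUnion.1 (not_not.1 hk)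
    have hτA : IsAttractorStrategy E Pᶜ D τ := hτB.congr fun s hs hsD => by
      rw [hτ, hτD, extend_val_of_notMem _ _ (not_not.2 hs), extend_val_of_notMem _ _ hsD]
    obtain ⟨j, hjU, hjw⟩ :=
      (hπ.shift k).exists_mem_of_mem_attrLevel hτA (n := n) (by simpa using hn)
    refine hπ.mem_parityObj (N := j + k)
      (winsFrom_of_subtype (a := ⟨_, hjU⟩) ?_ (fun a ha _ => ?_) hjw)
    · exact fun s hs hP t hst => hU s hs (not_not.1 hP) t hst
    · have haD : (a : S) ∈ D := ⟨a.2, ha⟩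
      rw [hτ, extend_val_of_notMem _ _ (hDV _ haD), hτD,
        Subtype.val_injective.extend_apply _ _ (⟨a, haD⟩ : D)]
  · push Not at hB
    subst hπ0
    let ρ : ℕ → V := fun k => ⟨π k, hB k⟩
    have hw0 := (hw'' (ρ 0)).resolve_left fun h => hs ⟨hB 0, h⟩
    exact hπ.mem_parityObj_of_subtype (ρ := ρ)
      (fun k _ => Subtype.val_injective.extend_apply _ _ (ρ k)) hw0

theorem PositionallyDetermined.of_even_min [Finite S] (hE : ∀ s, ∃ t, E s t)
    (hIH : ∀ V : Set S, ∀ v ∉ V, (∀ a : V, ∃ b : V, E a b) →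
      PositionallyDetermined (fun a b : V => E a b) (Subtype.val ⁻¹' P) (fun a => p a))
    {d : ℕ} (hd : Even d) (hmin : ∀ s, d ≤ p s) {s₀ : S} (hs₀ : p s₀ = d) :
    PositionallyDetermined E P p := by
  obtain ⟨σ', τ', hσ', hτ', hw'⟩ := hIH (attractor E P {s | p s = d})ᶜ s₀
    (fun h => h (subset_attractor hs₀)) (exists_edge_compl_attractor hE)
  by_cases hall : ∀ a, WinsFrom (fun a b : ↥(attractor E P {s | p s = d})ᶜ => E a b)
      (Subtype.val ⁻¹' P) σ' (fun a => p a) a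
  · obtain ⟨σA, hσAE, hσA⟩ := exists_isAttractorStrategy (P := P) (X := {s | p s = d}) hE
    exact ⟨_, σA, edge_extend_val _ _ hσ' hσAE, hσAE,
      fun s => Or.inl (winsFrom_extend_of_forall_winsFrom hd hmin (fun _ h => h) hall hσA s)⟩
  · push Not at hall
    obtain ⟨a₀, ha₀⟩ := hall
    exact positionallyDetermined_of_winsFrom_trap hE hIH
      (fun s hs hP t hst => notMem_attractor_of_edge hs hP hst) hτ' ((hw' a₀).resolve_left ha₀)

theorem positionallyDetermined_of_finite [Finite S] (hE : ∀ s, ∃ t, E s t) (P : Set S)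
    (p : S → ℕ) : PositionallyDetermined E P p := by
  induction hn : Nat.card S using Nat.strong_induction_on generalizing S with
  | _ n ih =>
  have hIH : ∀ (Q : Set S) (q : S → ℕ) (V : Set S), ∀ v ∉ V, (∀ a : V, ∃ b : V, E a b) →
      PositionallyDetermined (fun a b : V => E a b) (Subtype.val ⁻¹' Q) (fun a => q a) :=
    fun Q q V v hv hEV => ih _ (hn ▸ Finite.card_subtype_lt hv) hEV _ _ rfl
  rcases isEmpty_or_nonempty S with hS | hS
  · exact ⟨id, id, isEmptyElim, isEmptyElim, isEmptyElim⟩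
  obtain ⟨s₀, hs₀⟩ := Finite.exists_min p
  rcases Nat.even_or_odd (p s₀) with hd | hd
  · exact .of_even_min hE (hIH P p) hd hs₀ rfl
  · exact .of_compl (.of_even_min hE (hIH Pᶜ fun s => p s + 1) (Nat.even_add_one.2
      (Nat.not_even_iff_odd.2 hd)) (fun s => Nat.succ_le_succ (hs₀ s)) rfl)

end Zielonka

namespace DetGame

variable {S : Type} [Fintype S]

def Strat2.ofFun {G : DetGame S} (τ : S → S) (hτ : ∀ s, G.E s (τ s)) : G.Strat2 :=
  ⟨fun _ s => τ s, fun _ s _ => hτ s⟩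

section Outcome

variable (G : DetGame S) (s : S) (α : G.Strat1) (β : G.Strat2)

theorem histPair_fst (k : ℕ) :
    (G.histPair α β s k).1 = (List.range k).map (G.outcome s α β) := by
  induction k with
  | zero => rfl
  | succ k ih =>
    rw [List.range_succ, List.map_append, ← ih]
    rfl

theorem outcome_succ_of_mem {k : ℕ} (h : G.outcome s α β k ∈ G.S1) :
    G.outcome s α β (k + 1) =
      α.f ((List.range k).map (G.outcome s α β)) (G.outcome s α β k) := by
  rw [← histPair_fst]
  exact if_pos h

theorem outcome_succ_of_notMem {k : ℕ} (h : G.outcome s α β k ∉ G.S1) :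
    G.outcome s α β (k + 1) =
      β.f ((List.range k).map (G.outcome s α β)) (G.outcome s α β k) := by
  rw [← histPair_fst]
  exact if_neg h

theorem isPlay_outcome : G.IsPlay (G.outcome s α β) := by
  intro k
  by_cases h : G.outcome s α β k ∈ G.S1
  · rw [outcome_succ_of_mem G s α β h]
    exact α.valid _ _ h
  · rw [outcome_succ_of_notMem G s α β h]
    exact β.valid _ _ h

theorem isConsistent_outcome_ofFun {τ : S → S} (hτ : ∀ s, G.E s (τ s)) :
    IsConsistent G.E G.S1ᶜ τ (G.outcome s α (Strat2.ofFun τ hτ)) :=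
  ⟨G.isPlay_outcome s α _, fun _ hk => G.outcome_succ_of_notMem s α _ hk⟩

end Outcome

theorem exists_winsFrom_of_mem_win1 (G : DetGame S) {p : S → ℕ} {s : S}
    (hs : s ∈ G.Win1 (ParityObj p)) :
    ∃ σ : S → S, (∀ u, G.E u (σ u)) ∧ WinsFrom G.E G.S1 σ p s := by
  obtain ⟨σ, τ, hσ, hτ, hw⟩ := positionallyDetermined_of_finite G.exists_succ G.S1 p
  refine ⟨σ, hσ, (hw s).resolve_right fun hτw => ?_⟩
  obtain ⟨α, hα⟩ := hs
  exact (mem_parityObj_add_one_iff _ p).1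
    (hτw _ rfl (G.isConsistent_outcome_ofFun s α hτ)) (hα _)

end DetGame

theorem Moore.run_congr {I O : Type} (T : Moore I O) {w w' : ℕ → Set I} {j : ℕ}
    (h : ∀ i < j, w i = w' i) : T.run w j = T.run w' j := by
  induction j with
  | zero => rfl
  | succ j ih =>
    simp only [Moore.run]
    rw [ih fun i hi => h i (by omega), h j j.lt_succ_self]

namespace SynthGame

variable {S I O : Type} [Fintype S] (SG : SynthGame S I O)

theorem notMem_S1_of_edge {s t : S} (hs : s ∈ SG.S1) (hst : SG.E s t) : t ∉ SG.S1 :=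
  ((SG.bipartite s t hst).resolve_right fun h => h.1 hs).2

theorem mem_S1_of_edge {s t : S} (hs : s ∉ SG.S1) (hst : SG.E s t) : t ∈ SG.S1 :=
  ((SG.bipartite s t hst).resolve_left fun h => hs h.1).2

theorem mem_S1_iff_even {π : ℕ → S} (hπ : SG.IsPlay π) (h0 : π 0 = SG.sI) (k : ℕ) :
    π k ∈ SG.S1 ↔ Even k := by
  induction k with
  | zero => simpa [h0] using SG.sI_mem
  | succ k ih =>
    rw [Nat.even_add_one, ← ih]
    exact ⟨fun h hk => SG.notMem_S1_of_edge hk (hπ k) h,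
      fun h => SG.mem_S1_of_edge h (hπ k)⟩

def succO (s : S) (o : Set O) : S :=
  if h : s ∈ SG.S1 then (SG.complete1 s h o).choose else s

def succI (s : S) (i : Set I) : S :=
  if h : s ∉ SG.S1 then (SG.complete2 s h i).choose else s

theorem succO_spec {s : S} (h : s ∈ SG.S1) (o : Set O) :
    SG.E s (SG.succO s o) ∧ SG.labO (SG.succO s o) = o := by
  rw [succO, dif_pos h]
  exact (SG.complete1 s h o).choose_spec

theorem succI_spec {s : S} (h : s ∉ SG.S1) (i : Set I) :
    SG.E s (SG.succI s i) ∧ SG.labI (SG.succI s i) = i := by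
  rw [succI, dif_pos h]
  exact (SG.complete2 s h i).choose_spec

/-- The input letters read so far label the states at positions `2, 4, …` of the history. -/
def transducerStrategy (T : Moore I O) : SG.Strat1 where
  f h s := SG.succO s
    (T.out (T.run (fun i => SG.labI ((h ++ [s]).getD (2 * i + 2) SG.sI)) (h.length / 2)))
  valid _ _ hs := (SG.succO_spec hs _).1

theorem word_outcome_transducerStrategy (T : Moore I O) (β : SG.Strat2) :
    SG.word (SG.outcome SG.sI (SG.transducerStrategy T) β) =
      T.output fun i => (SG.word (SG.outcome SG.sI (SG.transducerStrategy T) β) i).1 := by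
  set π := SG.outcome SG.sI (SG.transducerStrategy T) β
  funext i
  refine Prod.ext rfl ?_
  have hmem : π (2 * i) ∈ SG.S1 :=
    (SG.mem_S1_iff_even (SG.isPlay_outcome _ _ _) rfl _).2 (even_two_mul i)
  have hstep : π (2 * i + 1) = _ := DetGame.outcome_succ_of_mem _ _ _ _ hmem
  show SG.labO (π (2 * i + 1)) = T.out _
  rw [hstep]
  refine (SG.succO_spec hmem _).2.trans (congrArg T.out ?_)
  rw [List.length_map, List.length_range, Nat.mul_div_cancel_left i two_pos]
  refine T.run_congr fun j hj => ?_
  rw [← List.map_singleton (f := π), ← List.map_append, ← List.range_succ,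
    List.getD_eq_getElem _ _ (by simp only [List.length_map, List.length_range]; omega),
    List.getElem_map, List.getElem_range]
  rfl

theorem mem_win1_of_mooreRealizable {p : S → ℕ} {φ : Set (ℕ → Set I × Set O)}
    (hfor : SG.IsGameFor p φ) (h : MooreRealizable φ) :
    SG.sI ∈ SG.Win1 (ParityObj p) := by
  obtain ⟨T, hT⟩ := h
  exact ⟨SG.transducerStrategy T, fun β => (hfor _ (SG.isPlay_outcome _ _ _) rfl).2
    (hT ⟨_, SG.word_outcome_transducerStrategy T β⟩)⟩

/-- Player 1 follows `σ`; at position `2 * j + 1` player 2 moves to the state labelled `w j`. -/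
def playOfInput (σ : S → S) (w : ℕ → Set I) : ℕ → S
  | 0 => SG.sI
  | k + 1 => if playOfInput σ w k ∈ SG.S1 then σ (playOfInput σ w k)
      else SG.succI (playOfInput σ w k) (w (k / 2))

theorem isConsistent_playOfInput {σ : S → S} (hσ : ∀ s, SG.E s (σ s)) (w : ℕ → Set I) :
    IsConsistent SG.E SG.S1 σ (SG.playOfInput σ w) := by
  refine ⟨fun k => ?_, fun k hk => if_pos hk⟩
  by_cases hk : SG.playOfInput σ w k ∈ SG.S1
  · rw [playOfInput, if_pos hk]
    exact hσ _
  · rw [playOfInput, if_neg hk]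
    exact (SG.succI_spec hk _).1

def strategyTransducer (σ : S → S) : Moore I O where
  Q := S
  fin := inferInstance
  qI := SG.sI
  tr q i := SG.succI (σ q) i
  out q := SG.labO (σ q)

theorem word_playOfInput {σ : S → S} (hσ : ∀ s, SG.E s (σ s)) (w : ℕ → Set I) :
    SG.word (SG.playOfInput σ w) = (SG.strategyTransducer σ).output w := by
  set π := SG.playOfInput σ w
  have hπ := SG.isConsistent_playOfInput hσ w
  have hmem k := SG.mem_S1_iff_even hπ.1 rfl k
  have hodd (j : ℕ) : π (2 * j + 1) = σ (π (2 * j)) := hπ.2 _ ((hmem _).2 (even_two_mul j))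
  have hnot (j : ℕ) : π (2 * j + 1) ∉ SG.S1 := by
    rw [hmem, Nat.even_add_one, not_not]
    exact even_two_mul j
  have heven (j : ℕ) : π (2 * j + 2) = SG.succI (π (2 * j + 1)) (w j) := by
    show (if π (2 * j + 1) ∈ SG.S1 then _ else _) = _
    rw [if_neg (hnot j), Nat.mul_add_div two_pos, Nat.div_eq_of_lt one_lt_two, add_zero]
  have hrun (j : ℕ) : (SG.strategyTransducer σ).run w j = π (2 * j) := by
    induction j with
    | zero => rfl
    | succ j ih => rw [Moore.run, ih, Nat.mul_succ, heven, hodd]; rfl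
  funext i
  have hσi : σ (π (2 * i)) ∉ SG.S1 := hodd i ▸ hnot i
  rw [word, heven, hodd, (SG.succI_spec hσi (w i)).2, ← hrun]
  rfl

theorem mooreRealizable_of_mem_win1 {p : S → ℕ} {φ : Set (ℕ → Set I × Set O)}
    (hfor : SG.IsGameFor p φ) (h : SG.sI ∈ SG.Win1 (ParityObj p)) :
    MooreRealizable φ := by
  obtain ⟨σ, hσ, hw⟩ := SG.exists_winsFrom_of_mem_win1 h
  refine ⟨SG.strategyTransducer σ, ?_⟩
  rintro _ ⟨w, rfl⟩
  have hπ := SG.isConsistent_playOfInput hσ w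
  rw [← SG.word_playOfInput hσ w]
  exact (hfor _ hπ.1 rfl).1 (hw _ rfl hπ)

end SynthGame

theorem synthesis_game_realizability_general {S I O : Type} [Fintype S]
    (SG : SynthGame S I O) (p : S → ℕ)
    (φ : Set (ℕ → Set I × Set O)) (hfor : SG.IsGameFor p φ) :
    MooreRealizable φ ↔ SG.sI ∈ SG.toDetGame.Win1 (ParityObj p) :=
  ⟨SG.mem_win1_of_mooreRealizable hfor, SG.mooreRealizable_of_mem_win1 hfor⟩

theorem synthesis_game_realizability {S I O : Type} [Fintype S] [Fintype I]
    [Fintype O] (SG : SynthGame S I O) (p : S → ℕ)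
    (φ : Set (ℕ → Set I × Set O)) (hfor : SG.IsGameFor p φ) :
    MooreRealizable φ ↔ SG.sI ∈ SG.toDetGame.Win1 (ParityObj p) :=
  synthesis_game_realizability_general SG p φ hfor
end
end

section
/- Let G = ((S,E),(S1,S2)) be a finite deterministic game graph, p : S → ℕ a priority function, and Φ = Parity(p). Define Es = {(u,t) ∈ E2 : u ∈ Win12(Φ) and t ∉ Win12(Φ)}. Then the safety assumption Es is non-restrictive for every state s ∈ S and Φ, and Es is safe-sufficient for every state s ∈ Win12(Φ) and Φ. -/
open scoped Classical
noncomputable section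

namespace DetGame

variable {S : Type} [Fintype S]

lemma outcome_succ (G : DetGame S) (α : Strat1 G) (β : Strat2 G) (s : S) (k : ℕ) :
    G.outcome s α β (k + 1) =
      (if (G.outcome s α β k) ∈ G.S1
        then α.f (G.histPair α β s k).1 (G.outcome s α β k)
        else β.f (G.histPair α β s k).1 (G.outcome s α β k)) := rfl

lemma outcome_isPlay (G : DetGame S) (α : Strat1 G) (β : Strat2 G) (s : S) :
    G.IsPlay (G.outcome s α β) := by
  intro k
  rw [outcome_succ]
  split
  · exact α.valid _ _ ‹_›
  · exact β.valid _ _ ‹_›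

lemma infSet_shift {T : Type} (π : ℕ → T) :
    infSet (fun k => π (k + 1)) = infSet π := by
  ext t
  constructor
  · intro h N
    obtain ⟨k, hk, hkt⟩ := h N
    exact ⟨k + 1, by omega, hkt⟩
  · intro h N
    obtain ⟨k, hk, hkt⟩ := h (N + 1)
    refine ⟨k - 1, by omega, ?_⟩
    show π (k - 1 + 1) = t
    rw [show k - 1 + 1 = k by omega]; exact hkt

/-- Strategy α shifted after a first state `s`. -/
def shift1 {G : DetGame S} (α : Strat1 G) (s : S) : Strat1 G :=
  ⟨fun h u => α.f (s :: h) u, fun h u hu => α.valid _ _ hu⟩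

def shift2 {G : DetGame S} (β : Strat2 G) (s : S) : Strat2 G :=
  ⟨fun h u => β.f (s :: h) u, fun h u hu => β.valid _ _ hu⟩

lemma histPair_shift (G : DetGame S) (α : Strat1 G) (β : Strat2 G) (s : S) :
    ∀ k, G.histPair α β s (k + 1) =
      (s :: (G.histPair (shift1 α s) (shift2 β s) (G.outcome s α β 1) k).1,
       (G.histPair (shift1 α s) (shift2 β s) (G.outcome s α β 1) k).2) := by
  intro k
  induction k with
  | zero => rfl
  | succ k ih =>
    show (let p := G.histPair α β s (k + 1);
      (p.1 ++ [p.2], if p.2 ∈ G.S1 then α.f p.1 p.2 else β.f p.1 p.2)) = _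
    rw [ih]
    rfl

lemma outcome_shift (G : DetGame S) (α : Strat1 G) (β : Strat2 G) (s : S) (k : ℕ) :
    G.outcome (G.outcome s α β 1) (shift1 α s) (shift2 β s) k
      = G.outcome s α β (k + 1) := by
  show _ = (G.histPair α β s (k + 1)).2
  rw [histPair_shift]
  rfl

lemma win12_next (G : DetGame S) (p : S → ℕ) {s : S}
    (hs : s ∈ G.Win12 (ParityObj p)) :
    ∃ t, G.E s t ∧ t ∈ G.Win12 (ParityObj p) := by
  obtain ⟨α, β, hπ⟩ := hs
  refine ⟨G.outcome s α β 1, G.outcome_isPlay α β s 0, shift1 α s, shift2 β s, ?_⟩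
  have h : G.outcome (G.outcome s α β 1) (shift1 α s) (shift2 β s)
      = fun k => G.outcome s α β (k + 1) := funext fun k => outcome_shift G α β s k
  show Even _
  rw [h, infSet_shift]
  exact hπ

/-- Player 1's strategy: stay in the cooperative winning set whenever possible. -/
def safeStrat (G : DetGame S) (p : S → ℕ) : Strat1 G :=
  ⟨fun _ u => if h : u ∈ G.Win12 (ParityObj p)
      then (G.win12_next p h).choose else (G.exists_succ u).choose, by
    intro h u _
    split
    · exact (G.win12_next p ‹_›).choose_spec.1
    · exact (G.exists_succ u).choose_spec⟩

lemma safeStrat_f (G : DetGame S) (p : S → ℕ) (h : List S) {u : S}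
    (hu : u ∈ G.Win12 (ParityObj p)) :
    (safeStrat G p).f h u ∈ G.Win12 (ParityObj p) := by
  show (if h : u ∈ G.Win12 (ParityObj p)
      then (G.win12_next p h).choose else (G.exists_succ u).choose) ∈ _
  rw [dif_pos hu]
  exact (G.win12_next p hu).choose_spec.2

end DetGame

theorem minimal_safety_assumption_nonrestrictive_and_sufficient
    {S : Type} [Fintype S] (G : DetGame S) (p : S → ℕ) (Es : Set (S × S))
    (hEs : Es = {e | e ∈ G.E2 ∧ e.1 ∈ G.Win12 (ParityObj p) ∧
      e.2 ∉ G.Win12 (ParityObj p)}) :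
    (∀ s : S, ¬ G.Restrictive Es s (ParityObj p)) ∧
    (∀ s ∈ G.Win12 (ParityObj p), G.SafeSufficient Es s (ParityObj p)) := by
  constructor
  · rintro s ⟨α, β, ⟨i, hi⟩, hsafe⟩
    rw [hEs] at hi
    exact hi.2.2 (hsafe (i + 1))
  · intro s hs
    refine ⟨DetGame.safeStrat G p, ?_⟩
    intro β
    set α := DetGame.safeStrat G p with hα
    set π := G.outcome s α β with hπ
    by_cases hall : ∀ k, π k ∈ G.Win12 (ParityObj p)
    · exact Or.inr hall
    · push_neg at hall
      have hex : ∃ k, π k ∉ G.Win12 (ParityObj p) := hall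
      have h0 : π 0 = s := rfl
      set m := Nat.find hex with hm
      have hmspec : π m ∉ G.Win12 (ParityObj p) := Nat.find_spec hex
      have hmne : m ≠ 0 := by
        intro h
        apply hmspec
        rw [h, h0]; exact hs
      obtain ⟨i, hi⟩ : ∃ i, m = i + 1 := ⟨m - 1, by omega⟩
      have hiw : π i ∈ G.Win12 (ParityObj p) := by
        by_contra hcon
        have hle : m ≤ i := Nat.find_le hcon
        omega
      have hnotS1 : π i ∉ G.S1 := by
        intro hS1
        apply hmspec
        rw [hi, hπ, G.outcome_succ, if_pos hS1]
        exact DetGame.safeStrat_f G p _ hiw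
      refine Or.inl ⟨i, ?_⟩
      rw [hEs]
      refine ⟨⟨G.outcome_isPlay α β s i, hnotS1⟩, hiw, ?_⟩
      rw [← hi]; exact hmspec
end
end
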